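/- arXiv:2412.20764 — 10 statements merged into one kernel-verified Lean document; each statement's English description precedes it below -/
import Mathlib

section
/- Let p ≥ 1, J ⊆ I a set of full μ-measure, (u_n)_{n≥0} a sequence of measurable [0,∞]-valued functions on I and v : I → [0,∞] measurable such that u_n(t) ≤ v(t) + (∫_{I(t)} k(t,s)^p u_{n−1}(s)^p μ(ds))^{1/p} for all n ≥ 1 and t ∈ J. Then for every n ≥ 1 and t ∈ J: u_n(t) ≤ v(t) + Σ_{i=1}^{n−1} (∫_{I(t)} R_{k^p,μ,i}(t,s) v(s)^p μ(ds))^{1/p} + (∫_{I(t)} R_{k^p,μ,n}(t,s) u_0(s)^p μ(ds))^{1/p}. -/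
/-!
Put `T f (t) = (∫_{I(t)} k(t,s)^p f(s)^p μ(ds))^{1/p}`. Since `T f (t)` is the `Lᵖ` norm of
`f` for the measure `k(t,·)^p μ` on `I(t)`, Minkowski's inequality makes `T` subadditive, and
`T` is monotone under a.e. inequalities. Iterating `u_{n+1} ≤ v + T u_n` on the full-measure
set `J` therefore gives `u_{n+1} ≤ v + ∑_{i<n} T^{i+1} v + T^{n+1} u_0`. Finally, Tonelli's
theorem on the triangle `{r ≤ s ≤ t}` shows that
`T^{i+1} f (t) = (∫_{I(t)} R_{k^p,μ,i+1}(t,s) f(s)^p μ(ds))^{1/p}`.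
-/

open MeasureTheory ENNReal

/-- The resolvent sequence of a non-negative kernel `k` with respect to a measure `μ`
on a set equipped with a relation `r` (interpreted as a preorder `r s t ↔ s ≤ t`):
`res r μ k 0 = k` corresponds to `R_{k,μ,1}` and
`res r μ k (n+1) t s = ∫_{[s,t]} k t u * res r μ k n u s ∂μ` corresponds to `R_{k,μ,n+2}`. -/
noncomputable def res {I : Type*} [MeasurableSpace I] (r : I → I → Prop)
    (μ : Measure I) (k : I → I → ℝ≥0∞) : ℕ → I → I → ℝ≥0∞
  | 0, t, s => k t s
  | n + 1, t, s => ∫⁻ u in {u : I | r s u ∧ r u t}, k t u * res r μ k n u s ∂μ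

open Set Function

section ProdSections

variable {α β : Type*} [MeasurableSpace α] [MeasurableSpace β]

theorem setLIntegral_preimage_prodMk_eq_lintegral_indicator {ν : Measure β} {S : Set (α × β)}
    (hS : MeasurableSet S) (f : α × β → ℝ≥0∞) (a : α) :
    ∫⁻ b in Prod.mk a ⁻¹' S, f (a, b) ∂ν = ∫⁻ b, S.indicator f (a, b) ∂ν := by
  rw [← lintegral_indicator (measurable_prodMk_left hS)]
  rfl

theorem Measurable.setLIntegral_preimage_prodMk {ν : Measure β} [SFinite ν] {S : Set (α × β)}
    (hS : MeasurableSet S) {f : α × β → ℝ≥0∞} (hf : Measurable f) :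
    Measurable fun a => ∫⁻ b in Prod.mk a ⁻¹' S, f (a, b) ∂ν := by
  simp_rw [setLIntegral_preimage_prodMk_eq_lintegral_indicator hS]
  exact (hf.indicator hS).lintegral_prod_right'

theorem measurable_indicator_of_measurable_subtype {γ : Type*} [MeasurableSpace γ] [Zero γ]
    {s : Set α} (hs : MeasurableSet s) {f : α → γ} (hf : Measurable fun x : s => f x) :
    Measurable (s.indicator f) := by
  refine measurable_of_restrict_of_restrict_compl hs ?_ ?_
  · convert hf using 1
    exact funext fun x => indicator_of_mem x.2 f
  · convert measurable_const (a := (0 : γ)) using 1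
    exact funext fun x => indicator_of_notMem x.2 f

end ProdSections

theorem le_sum_iterate_add_iterate_of_le_add {α : Type*} [MeasurableSpace α] {μ : Measure α}
    {T : (α → ℝ≥0∞) → α → ℝ≥0∞} (hmono : ∀ f g, f ≤ᵐ[μ] g → T f ≤ T g)
    (hadd : ∀ f g, Measurable f → Measurable g → T (f + g) ≤ T f + T g) (hzero : T 0 = 0)
    (hmeas : ∀ f, Measurable f → Measurable (T f))
    {J : Set α} (hJ : μ Jᶜ = 0) {u : ℕ → α → ℝ≥0∞} (hu : Measurable (u 0))
    {v : α → ℝ≥0∞} (hv : Measurable v) (hrec : ∀ n, ∀ t ∈ J, u (n + 1) t ≤ v t + T (u n) t) :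
    ∀ n, ∀ t ∈ J,
      u (n + 1) t ≤ v t + ∑ i ∈ Finset.range n, T^[i + 1] v t + T^[n + 1] (u 0) t := by
  have hmeas_iter : ∀ i {f}, Measurable f → Measurable (T^[i] f) := fun i _ hf =>
    Iterate.rec Measurable hf hmeas i
  intro n
  induction n with
  | zero => simpa using hrec 0
  | succ n ih =>
    intro t ht
    set S := ∑ i ∈ Finset.range n, T^[i + 1] v
    have hS : Measurable S := Finset.sum_induction _ Measurable (fun _ _ => Measurable.add)
      measurable_zero fun i _ => hmeas_iter _ hv
    have hB : Measurable (T^[n + 1] (u 0)) := hmeas_iter _ hu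
    have hu_le : u (n + 1) ≤ᵐ[μ] v + S + T^[n + 1] (u 0) := by
      filter_upwards [measure_eq_zero_iff_ae_notMem.mp hJ] with s hs
      simpa [S] using ih s (notMem_compl_iff.mp hs)
    calc u (n + 1 + 1) t ≤ v t + T (u (n + 1)) t := hrec _ t ht
      _ ≤ v t + (T v t + ∑ i ∈ Finset.range n, T^[i + 1 + 1] v t + T^[n + 1 + 1] (u 0) t) := by
        gcongr
        calc T (u (n + 1)) t ≤ T (v + S + T^[n + 1] (u 0)) t := hmono _ _ hu_le t
          _ ≤ T (v + S) t + T (T^[n + 1] (u 0)) t := hadd _ _ (hv.add hS) hB t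
          _ ≤ T v t + T S t + T^[n + 1 + 1] (u 0) t := by
            rw [iterate_succ_apply' T (n + 1)]
            gcongr
            exact hadd _ _ hv hS t
          _ ≤ _ := by
            gcongr
            refine (Finset.le_sum_of_subadditive_on_pred T Measurable hzero.le hadd
              (fun _ _ => Measurable.add) _ fun i _ => hmeas_iter _ hv) t |>.trans_eq ?_
            simp [Finset.sum_apply, ← iterate_succ_apply' T]
      _ = v t + ∑ i ∈ Finset.range (n + 1), T^[i + 1] v t + T^[n + 1 + 1] (u 0) t := by
        rw [Finset.sum_range_succ', zero_add, iterate_one]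
        ring

section Volterra

variable {I : Type*} [MeasurableSpace I] [Preorder I] {μ : Measure I} {K K' : I → I → ℝ≥0∞}
  {p : ℝ}

theorem measurableSet_Iic_of_measurableSet_le (hΔ : MeasurableSet {q : I × I | q.2 ≤ q.1})
    (t : I) : MeasurableSet (Iic t) :=
  measurable_prodMk_left hΔ

theorem measurableSet_Icc_of_measurableSet_le (hΔ : MeasurableSet {q : I × I | q.2 ≤ q.1})
    (s t : I) : MeasurableSet (Icc s t) :=
  (measurable_prodMk_right hΔ).inter (measurable_prodMk_left hΔ)

theorem lintegral_Iic_lintegral_Iic_swap [SFinite μ]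
    (hΔ : MeasurableSet {q : I × I | q.2 ≤ q.1}) {F : I × I → ℝ≥0∞} (hF : Measurable F) (t : I) :
    ∫⁻ s in Iic t, ∫⁻ r in Iic s, F (s, r) ∂μ ∂μ =
      ∫⁻ r in Iic t, ∫⁻ s in Icc r t, F (s, r) ∂μ ∂μ := by
  set D := {q : I × I | q.2 ≤ q.1 ∧ q.1 ≤ t}
  have hIic := measurableSet_Iic_of_measurableSet_le hΔ
  have hD : MeasurableSet D := hΔ.inter (measurable_fst (hIic t))
  calc ∫⁻ s in Iic t, ∫⁻ r in Iic s, F (s, r) ∂μ ∂μ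
        = ∫⁻ s, ∫⁻ r, D.indicator F (s, r) ∂μ ∂μ := by
        rw [← lintegral_indicator (hIic t)]
        refine lintegral_congr fun s => ?_
        by_cases hs : s ≤ t
        · rw [indicator_of_mem (mem_Iic.mpr hs), ← lintegral_indicator (hIic s)]
          exact lintegral_congr fun r => by by_cases hr : r ≤ s <;> simp [D, indicator, hr, hs]
        · simp [D, indicator, hs]
    _ = ∫⁻ r, ∫⁻ s, D.indicator F (s, r) ∂μ ∂μ :=
        lintegral_lintegral_swap (hF.indicator hD).aemeasurable
    _ = ∫⁻ r in Iic t, ∫⁻ s in Icc r t, F (s, r) ∂μ ∂μ := by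
        rw [← lintegral_indicator (hIic t)]
        refine lintegral_congr fun r => ?_
        by_cases hr : r ≤ t
        · rw [indicator_of_mem (mem_Iic.mpr hr),
            ← lintegral_indicator (measurableSet_Icc_of_measurableSet_le hΔ r t)]
          rfl
        · rw [indicator_of_notMem (show r ∉ Iic t from hr)]
          exact (lintegral_congr fun s => indicator_of_notMem (fun h => hr (h.1.trans h.2)) F).trans
            lintegral_zero

theorem measurable_res [SFinite μ] (hΔ : MeasurableSet {q : I × I | q.2 ≤ q.1})
    (hK : Measurable (uncurry K)) : ∀ n, Measurable (uncurry (res (· ≤ ·) μ K n))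
  | 0 => hK
  | n + 1 => by
    have hD : MeasurableSet {x : (I × I) × I | x.1.2 ≤ x.2 ∧ x.2 ≤ x.1.1} :=
      ((measurable_snd.prodMk (measurable_snd.comp measurable_fst)) hΔ).inter
        (((measurable_fst.comp measurable_fst).prodMk measurable_snd) hΔ)
    have hF : Measurable fun x : (I × I) × I => K x.1.1 x.2 * res (· ≤ ·) μ K n x.2 x.1.2 :=
      (hK.comp ((measurable_fst.comp measurable_fst).prodMk measurable_snd)).mul
        ((measurable_res hΔ hK n).comp (measurable_snd.prodMk (measurable_snd.comp measurable_fst)))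
    exact hF.setLIntegral_preimage_prodMk hD

theorem res_congr_of_le (hΔ : MeasurableSet {q : I × I | q.2 ≤ q.1})
    (h : ∀ t s, s ≤ t → K t s = K' t s) :
    ∀ n {t s : I}, s ≤ t → res (· ≤ ·) μ K n t s = res (· ≤ ·) μ K' n t s
  | 0, t, s, hst => h t s hst
  | n + 1, t, s, _ =>
    setLIntegral_congr_fun (measurableSet_Icc_of_measurableSet_le hΔ s t) fun u hu => by
      rw [h t u hu.2, res_congr_of_le hΔ h n hu.1]

noncomputable def volterraOp (μ : Measure I) (K : I → I → ℝ≥0∞) (p : ℝ) (f : I → ℝ≥0∞) (t : I) :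
    ℝ≥0∞ :=
  (∫⁻ s in Iic t, K t s * f s ^ p ∂μ) ^ (1 / p)

theorem volterraOp_congr (hΔ : MeasurableSet {q : I × I | q.2 ≤ q.1})
    (h : ∀ t s, s ≤ t → K t s = K' t s) : volterraOp μ K p = volterraOp μ K' p := by
  ext f t
  unfold volterraOp
  rw [setLIntegral_congr_fun (measurableSet_Iic_of_measurableSet_le hΔ t) fun s hs => by
    rw [h t s hs]]

theorem volterraOp_zero (hp : 0 < p) : volterraOp μ K p 0 = 0 := by
  ext t
  simp [volterraOp, hp]

theorem volterraOp_mono_ae (hp : 0 ≤ p) {f g : I → ℝ≥0∞} (hfg : f ≤ᵐ[μ] g) :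
    volterraOp μ K p f ≤ volterraOp μ K p g := fun t =>
  ENNReal.rpow_le_rpow (lintegral_mono_ae ((ae_restrict_of_ae hfg).mono fun s hs => by gcongr))
    (by positivity)

theorem volterraOp_add_le (hK : ∀ t, Measurable (K t)) (hp : 1 ≤ p) {f g : I → ℝ≥0∞}
    (hf : Measurable f) (hg : Measurable g) :
    volterraOp μ K p (f + g) ≤ volterraOp μ K p f + volterraOp μ K p g := by
  intro t
  have h_withDensity : ∀ φ : I → ℝ≥0∞, Measurable φ → ∫⁻ s in Iic t, K t s * φ s ^ p ∂μ =
      ∫⁻ s, φ s ^ p ∂(μ.restrict (Iic t)).withDensity (K t) := fun φ hφ =>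
    (lintegral_withDensity_eq_lintegral_mul _ (hK t) (hφ.pow_const p)).symm
  rw [Pi.add_apply]
  simp only [volterraOp]
  rw [h_withDensity _ (hf.add hg), h_withDensity _ hf, h_withDensity _ hg]
  exact ENNReal.lintegral_Lp_add_le hf.aemeasurable hg.aemeasurable hp

theorem measurable_volterraOp [SFinite μ] (hΔ : MeasurableSet {q : I × I | q.2 ≤ q.1})
    (hK : Measurable (uncurry K)) {f : I → ℝ≥0∞} (hf : Measurable f) :
    Measurable (volterraOp μ K p f) :=
  ((hK.mul ((hf.comp measurable_snd).pow_const p)).setLIntegral_preimage_prodMk hΔ).pow_const _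

theorem lintegral_Iic_mul_lintegral_res [SFinite μ] (hΔ : MeasurableSet {q : I × I | q.2 ≤ q.1})
    (hK : Measurable (uncurry K)) {f : I → ℝ≥0∞} (hf : Measurable f) (n : ℕ) (t : I) :
    ∫⁻ s in Iic t, K t s * ∫⁻ r in Iic s, res (· ≤ ·) μ K n s r * f r ∂μ ∂μ =
      ∫⁻ r in Iic t, res (· ≤ ·) μ K (n + 1) t r * f r ∂μ := by
  have hres := measurable_res (μ := μ) hΔ hK n
  have hKt : Measurable (K t) := hK.comp measurable_prodMk_left
  calc _ = ∫⁻ s in Iic t, ∫⁻ r in Iic s, K t s * (res (· ≤ ·) μ K n s r * f r) ∂μ ∂μ :=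
        lintegral_congr fun s =>
          (lintegral_const_mul _ ((hres.comp measurable_prodMk_left).mul hf)).symm
    _ = ∫⁻ r in Iic t, ∫⁻ s in Icc r t, K t s * (res (· ≤ ·) μ K n s r * f r) ∂μ ∂μ :=
        lintegral_Iic_lintegral_Iic_swap hΔ
          ((hKt.comp measurable_fst).mul (hres.mul (hf.comp measurable_snd))) t
    _ = _ := lintegral_congr fun r => by
        simp_rw [← mul_assoc]
        exact lintegral_mul_const _ (hKt.mul (hres.comp measurable_prodMk_right))

theorem volterraOp_iterate_succ [SFinite μ] (hΔ : MeasurableSet {q : I × I | q.2 ≤ q.1})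
    (hK : Measurable (uncurry K)) (hp : 0 < p) {f : I → ℝ≥0∞} (hf : Measurable f) (n : ℕ)
    (t : I) :
    (volterraOp μ K p)^[n + 1] f t =
      (∫⁻ s in Iic t, res (· ≤ ·) μ K n t s * f s ^ p ∂μ) ^ (1 / p) := by
  induction n generalizing t with
  | zero => rfl
  | succ n ih =>
    rw [iterate_succ_apply', volterraOp]
    simp_rw [ih, ← ENNReal.rpow_mul, one_div_mul_cancel hp.ne', ENNReal.rpow_one]
    rw [lintegral_Iic_mul_lintegral_res hΔ hK (hf.pow_const p)]

end Volterra

/-- **Resolvent sequence inequality** (Proposition 1 of the paper): if `J` has full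
measure and `u (n+1) t ≤ v t + (∫_{I(t)} k(t,s)^p (u n s)^p μ(ds))^{1/p}` on `J`, then
`u (n+1) t ≤ v t + ∑_{i=1}^{n} (∫_{I(t)} R_{k^p,μ,i}(t,s) v(s)^p μ(ds))^{1/p}
  + (∫_{I(t)} R_{k^p,μ,n+1}(t,s) (u 0 s)^p μ(ds))^{1/p}` on `J`
(the index `n` here is shifted by one with respect to the paper: `res … i = R_{·,i+1}`). -/
theorem resolvent_sequence_inequality {I : Type*} [MeasurableSpace I] [Preorder I]
    (hΔ : MeasurableSet {q : I × I | q.2 ≤ q.1})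
    (μ : Measure I) [SigmaFinite μ]
    (k : I → I → ℝ≥0∞)
    (hk : Measurable fun q : {q : I × I // q.2 ≤ q.1} => k q.1.1 q.1.2)
    (p : ℝ) (hp : 1 ≤ p)
    (J : Set I) (hJ : μ Jᶜ = 0)
    (u : ℕ → I → ℝ≥0∞) (hu : ∀ n, Measurable (u n))
    (v : I → ℝ≥0∞) (hv : Measurable v)
    (hrec : ∀ n : ℕ, ∀ t ∈ J,
      u (n + 1) t ≤ v t + (∫⁻ s in {s : I | s ≤ t}, k t s ^ p * u n s ^ p ∂μ) ^ (1 / p)) :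
    ∀ n : ℕ, ∀ t ∈ J,
      u (n + 1) t ≤ v t
        + ∑ i ∈ Finset.range n,
            (∫⁻ s in {s : I | s ≤ t},
              res (· ≤ ·) μ (fun a b => k a b ^ p) i t s * v s ^ p ∂μ) ^ (1 / p)
        + (∫⁻ s in {s : I | s ≤ t},
            res (· ≤ ·) μ (fun a b => k a b ^ p) n t s * u 0 s ^ p ∂μ) ^ (1 / p) := by
  have hp0 : 0 < p := zero_lt_one.trans_le hp
  -- `k ^ p` is only measurable on the triangle; extend it by zero off it.
  set K : I → I → ℝ≥0∞ := fun t s =>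
    {q : I × I | q.2 ≤ q.1}.indicator (fun q => k q.1 q.2 ^ p) (t, s)
  have hK : Measurable (uncurry K) := measurable_indicator_of_measurable_subtype hΔ (hk.pow_const p)
  have hKk : ∀ t s, s ≤ t → k t s ^ p = K t s := fun t s hst =>
    (indicator_of_mem (show (t, s) ∈ {q : I × I | q.2 ≤ q.1} from hst)
      (fun q : I × I => k q.1 q.2 ^ p)).symm
  have key := le_sum_iterate_add_iterate_of_le_add (T := volterraOp μ K p)
    (fun _ _ => volterraOp_mono_ae hp0.le)
    (fun _ _ => volterraOp_add_le (fun t => hK.comp measurable_prodMk_left) hp)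
    (volterraOp_zero hp0) (fun _ => measurable_volterraOp hΔ hK) hJ (hu 0) hv
    fun n t ht => (hrec n t ht).trans_eq (by rw [← volterraOp_congr hΔ hKk]; rfl)
  intro n t ht
  have hres : ∀ i (f : I → ℝ≥0∞),
      ∫⁻ s in {s | s ≤ t}, res (· ≤ ·) μ (fun a b => k a b ^ p) i t s * f s ∂μ =
        ∫⁻ s in Iic t, res (· ≤ ·) μ K i t s * f s ∂μ := fun i f =>
    setLIntegral_congr_fun (measurableSet_Iic_of_measurableSet_le hΔ t) fun s hs => by
      rw [res_congr_of_le hΔ hKk i hs]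
  simpa only [hres, volterraOp_iterate_succ hΔ hK hp0 hv,
    volterraOp_iterate_succ hΔ hK hp0 (hu 0)] using key n t ht
end

section
/- Let p ≥ 1, J ⊆ I a set of full μ-measure and u, u_0, v : I → [0,∞] measurable such that for every t ∈ J: u_0(t) ≤ u(t), u(t) ≤ v(t) + (∫_{I(t)} k(t,s)^p u_0(s)^p μ(ds))^{1/p}, and lim_{n→∞} ∫_{I(t)} R_{k^p,μ,n}(t,s) u_0(s)^p μ(ds) = 0. Then u(t) ≤ v(t) + Σ_{n=1}^∞ (∫_{I(t)} R_{k^p,μ,n}(t,s) v(s)^p μ(ds))^{1/p} for every t ∈ J. Moreover, if p = 1 and the inequality u(t) ≤ v(t) + ∫_{I(t)} k(t,s) u_0(s) μ(ds) holds with equality and u_0 = u on J, then equality holds in the conclusion. -/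
/-! Extend `k ^ p` by zero off the triangle, so that the resolvent kernels become iterated
integrals over all of `I` and Tonelli's theorem applies: integrating `R_n(t, ·)` against
`K w = ∫ k(·, s) ^ p w(s) μ(ds)` gives the integral against `R_{n+1}(t, ·)`.
With `U_n(t) = ∫ R_n(t, s) u₀(s) ^ p μ(ds)` and `V_n` the same with `v`, Minkowski's inequality
in `L^p(R_n(t, s) μ(ds))` applied to `u₀ ≤ v + (K u₀ ^ p) ^ (1/p)` (a.e.) gives
`U_n ^ (1/p) ≤ V_n ^ (1/p) + U_{n+1} ^ (1/p)`; telescoping and `U_n → 0` yield the bound.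
For `p = 1` and `u₀ = u = v + K u₀` every step is an identity. -/

open MeasureTheory ENNReal Filter

open Function

namespace ENNReal

variable {x y : ℕ → ℝ≥0∞}

lemma le_sum_range_add_of_le_add_succ (h : ∀ n, x n ≤ y n + x (n + 1)) (N : ℕ) :
    x 0 ≤ ∑ n ∈ Finset.range N, y n + x N := by
  induction N with
  | zero => simp
  | succ N ih =>
    calc x 0 ≤ ∑ n ∈ Finset.range N, y n + x N := ih
      _ ≤ ∑ n ∈ Finset.range N, y n + (y N + x (N + 1)) := by gcongr; exact h N
      _ = ∑ n ∈ Finset.range (N + 1), y n + x (N + 1) := by rw [Finset.sum_range_succ, add_assoc]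

lemma eq_sum_range_add_of_eq_add_succ (h : ∀ n, x n = y n + x (n + 1)) (N : ℕ) :
    x 0 = ∑ n ∈ Finset.range N, y n + x N := by
  induction N with
  | zero => simp
  | succ N ih => rw [ih, h N, Finset.sum_range_succ, add_assoc]

lemma tendsto_sum_range_add (hx : Tendsto x atTop (nhds 0)) :
    Tendsto (fun N => ∑ n ∈ Finset.range N, y n + x N) atTop (nhds (∑' n, y n)) := by
  simpa using (ENNReal.tendsto_nat_tsum y).add hx

lemma le_tsum_of_le_add_succ (h : ∀ n, x n ≤ y n + x (n + 1))
    (hx : Tendsto x atTop (nhds 0)) : x 0 ≤ ∑' n, y n :=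
  ge_of_tendsto' (tendsto_sum_range_add hx) (le_sum_range_add_of_le_add_succ h)

lemma eq_tsum_of_eq_add_succ (h : ∀ n, x n = y n + x (n + 1))
    (hx : Tendsto x atTop (nhds 0)) : x 0 = ∑' n, y n :=
  tendsto_nhds_unique (tendsto_const_nhds.congr (eq_sum_range_add_of_eq_add_succ h))
    (tendsto_sum_range_add hx)

end ENNReal

lemma lintegral_lintegral_mul_swap {α β : Type*} [MeasurableSpace α] [MeasurableSpace β]
    {μ : Measure α} {ν : Measure β} [SFinite μ] [SFinite ν]
    {a : α → ℝ≥0∞} {B : α → β → ℝ≥0∞} {g : β → ℝ≥0∞}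
    (ha : Measurable a) (hB : Measurable (uncurry B)) (hg : Measurable g) :
    ∫⁻ y, (∫⁻ x, a x * B x y ∂μ) * g y ∂ν = ∫⁻ x, a x * ∫⁻ y, B x y * g y ∂ν ∂μ := by
  calc ∫⁻ y, (∫⁻ x, a x * B x y ∂μ) * g y ∂ν
      = ∫⁻ y, ∫⁻ x, a x * (B x y * g y) ∂μ ∂ν := by
        refine lintegral_congr fun y => ?_
        have hy : Measurable fun x => a x * B x y :=
          ha.mul (hB.comp (measurable_id.prodMk measurable_const))
        rw [← lintegral_mul_const _ hy]
        simp_rw [mul_assoc]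
    _ = ∫⁻ x, ∫⁻ y, a x * (B x y * g y) ∂ν ∂μ :=
        (lintegral_lintegral_swap ((ha.comp measurable_fst).mul
          (hB.mul (hg.comp measurable_snd))).aemeasurable).symm
    _ = ∫⁻ x, a x * ∫⁻ y, B x y * g y ∂ν ∂μ :=
        lintegral_congr fun x =>
          lintegral_const_mul _ ((hB.comp (measurable_const.prodMk measurable_id)).mul hg)

section Resolvent

variable {I : Type*} [MeasurableSpace I] [Preorder I] {μ : Measure I} {κ : I → I → ℝ≥0∞}

lemma exists_measurable_extend_zero (hΔ : MeasurableSet {q : I × I | q.2 ≤ q.1})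
    {k : I → I → ℝ≥0∞} (hk : Measurable fun q : {q : I × I // q.2 ≤ q.1} => k q.1.1 q.1.2) :
    ∃ κ : I → I → ℝ≥0∞, Measurable (uncurry κ) ∧ (∀ ⦃t s⦄, ¬ s ≤ t → κ t s = 0) ∧
      ∀ ⦃t s⦄, s ≤ t → κ t s = k t s := by
  classical
  refine ⟨fun t s => if s ≤ t then k t s else 0, ?_, fun t s h => if_neg h,
    fun t s h => if_pos h⟩
  refine measurable_of_restrict_of_restrict_compl hΔ ?_ ?_
  · have h : {q : I × I | q.2 ≤ q.1}.domRestrict (uncurry fun t s => if s ≤ t then k t s else 0)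
        = fun q => k q.1.1 q.1.2 := funext fun q => if_pos q.2
    exact h ▸ hk
  · have h : {q : I × I | q.2 ≤ q.1}ᶜ.domRestrict (uncurry fun t s => if s ≤ t then k t s else 0)
        = fun _ => 0 := funext fun q => if_neg q.2
    exact h ▸ measurable_const

lemma res_eq_of_le (hΔ : MeasurableSet {q : I × I | q.2 ≤ q.1}) {k : I → I → ℝ≥0∞}
    (hkκ : ∀ ⦃t s⦄, s ≤ t → κ t s = k t s) (n : ℕ) :
    ∀ ⦃t s⦄, s ≤ t → res (· ≤ ·) μ k n t s = res (· ≤ ·) μ κ n t s := by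
  induction n with
  | zero => exact fun t s h => (hkκ h).symm
  | succ n ih =>
    intro t s _
    have hmeas : MeasurableSet {u : I | s ≤ u ∧ u ≤ t} :=
      (hΔ.preimage (measurable_id.prodMk measurable_const)).inter
        (hΔ.preimage (measurable_const.prodMk measurable_id))
    refine setLIntegral_congr_fun hmeas fun u hu => ?_
    simp only [hkκ hu.2, ih hu.1]

lemma res_eq_zero_of_not_le (hκ : ∀ ⦃t s⦄, ¬ s ≤ t → κ t s = 0) (n : ℕ) :
    ∀ ⦃t s⦄, ¬ s ≤ t → res (· ≤ ·) μ κ n t s = 0 := by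
  induction n with
  | zero => exact hκ
  | succ n _ =>
    intro t s h
    have : {u : I | s ≤ u ∧ u ≤ t} = ∅ :=
      Set.eq_empty_of_forall_notMem fun u hu => h (hu.1.trans hu.2)
    simp [res, this]

lemma res_succ_eq_lintegral (hκ : ∀ ⦃t s⦄, ¬ s ≤ t → κ t s = 0) (n : ℕ) (t s : I) :
    res (· ≤ ·) μ κ (n + 1) t s = ∫⁻ u, κ t u * res (· ≤ ·) μ κ n u s ∂μ := by
  refine setLIntegral_eq_of_support_subset fun u hu => ?_
  by_contra h
  rcases not_and_or.mp h with h | h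
  · exact hu (by simp [res_eq_zero_of_not_le hκ n h])
  · exact hu (by simp [hκ h])

variable (μ κ) in
noncomputable def resIntegral (n : ℕ) (w : I → ℝ≥0∞) (t : I) : ℝ≥0∞ :=
  ∫⁻ s, res (· ≤ ·) μ κ n t s * w s ∂μ

lemma setLIntegral_res_eq_resIntegral (hΔ : MeasurableSet {q : I × I | q.2 ≤ q.1})
    {k : I → I → ℝ≥0∞} (hκ : ∀ ⦃t s⦄, ¬ s ≤ t → κ t s = 0)
    (hkκ : ∀ ⦃t s⦄, s ≤ t → κ t s = k t s) (n : ℕ) (w : I → ℝ≥0∞) (t : I) :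
    ∫⁻ s in {s | s ≤ t}, res (· ≤ ·) μ k n t s * w s ∂μ = resIntegral μ κ n w t := by
  have hIic : MeasurableSet {s | s ≤ t} := hΔ.preimage (measurable_const.prodMk measurable_id)
  rw [setLIntegral_congr_fun hIic fun s hs => by rw [res_eq_of_le hΔ hkκ n hs]]
  exact setLIntegral_eq_of_support_subset fun s hs =>
    by_contra fun h => hs (by simp [res_eq_zero_of_not_le hκ n h])

variable [SFinite μ]

lemma measurable_res_s3 (hκm : Measurable (uncurry κ)) (hκ : ∀ ⦃t s⦄, ¬ s ≤ t → κ t s = 0) :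
    ∀ n, Measurable (uncurry (res (· ≤ ·) μ κ n))
  | 0 => hκm
  | n + 1 => by
    simp_rw [uncurry_def, res_succ_eq_lintegral hκ]
    exact Measurable.lintegral_prod_right'
      (f := fun x : (I × I) × I => κ x.1.1 x.2 * res (· ≤ ·) μ κ n x.2 x.1.2)
      ((hκm.comp ((measurable_fst.comp measurable_fst).prodMk measurable_snd)).mul
        ((measurable_res_s3 hκm hκ n).comp
          (measurable_snd.prodMk (measurable_snd.comp measurable_fst))))

lemma measurable_resIntegral (hκm : Measurable (uncurry κ))
    (hκ : ∀ ⦃t s⦄, ¬ s ≤ t → κ t s = 0) (n : ℕ) {w : I → ℝ≥0∞} (hw : Measurable w) :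
    Measurable (resIntegral μ κ n w) :=
  Measurable.lintegral_prod_right' ((measurable_res_s3 hκm hκ n).mul (hw.comp measurable_snd))

lemma resIntegral_succ (hκm : Measurable (uncurry κ)) (hκ : ∀ ⦃t s⦄, ¬ s ≤ t → κ t s = 0)
    (n : ℕ) {w : I → ℝ≥0∞} (hw : Measurable w) (t : I) :
    resIntegral μ κ (n + 1) w t = ∫⁻ u, κ t u * resIntegral μ κ n w u ∂μ := by
  simp_rw [resIntegral, res_succ_eq_lintegral hκ]
  exact lintegral_lintegral_mul_swap (hκm.comp (measurable_const.prodMk measurable_id))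
    (measurable_res_s3 hκm hκ n) hw

lemma resIntegral_resIntegral_zero (hκm : Measurable (uncurry κ))
    (hκ : ∀ ⦃t s⦄, ¬ s ≤ t → κ t s = 0) {w : I → ℝ≥0∞} (hw : Measurable w) (n : ℕ) (t : I) :
    resIntegral μ κ n (resIntegral μ κ 0 w) t = resIntegral μ κ (n + 1) w t := by
  induction n generalizing t with
  | zero => exact (resIntegral_succ hκm hκ 0 hw t).symm
  | succ n ih =>
    rw [resIntegral_succ hκm hκ n (measurable_resIntegral hκm hκ 0 hw),
      resIntegral_succ hκm hκ (n + 1) hw]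
    simp_rw [ih]

lemma rpow_resIntegral_le_add_succ (hκm : Measurable (uncurry κ))
    (hκ : ∀ ⦃t s⦄, ¬ s ≤ t → κ t s = 0) {p : ℝ} (hp : 1 ≤ p) {u₀ v : I → ℝ≥0∞}
    (hu₀ : Measurable u₀) (hv : Measurable v)
    (h : ∀ᵐ s ∂μ, u₀ s ≤ v s + resIntegral μ κ 0 (u₀ · ^ p) s ^ (1 / p)) (n : ℕ) (t : I) :
    resIntegral μ κ n (u₀ · ^ p) t ^ (1 / p) ≤
      resIntegral μ κ n (v · ^ p) t ^ (1 / p) + resIntegral μ κ (n + 1) (u₀ · ^ p) t ^ (1 / p) := by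
  have hp0 : 0 < p := zero_lt_one.trans_le hp
  set ν := μ.withDensity (res (· ≤ ·) μ κ n t)
  have hν {f : I → ℝ≥0∞} (hf : Measurable f) : resIntegral μ κ n f t = ∫⁻ s, f s ∂ν :=
    (lintegral_withDensity_eq_lintegral_mul μ (measurable_res_s3 hκm hκ n).of_uncurry_left hf).symm
  set g := fun s => resIntegral μ κ 0 (u₀ · ^ p) s ^ (1 / p)
  have hg : Measurable g := (measurable_resIntegral hκm hκ 0 (hu₀.pow_const p)).pow_const _
  have hgp : ∀ s, g s ^ p = resIntegral μ κ 0 (u₀ · ^ p) s := fun s => by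
    rw [← ENNReal.rpow_mul, one_div_mul_cancel hp0.ne', ENNReal.rpow_one]
  calc resIntegral μ κ n (u₀ · ^ p) t ^ (1 / p)
      = (∫⁻ s, u₀ s ^ p ∂ν) ^ (1 / p) := by rw [hν (hu₀.pow_const p)]
    _ ≤ (∫⁻ s, (v + g) s ^ p ∂ν) ^ (1 / p) := by
        gcongr ?_ ^ _
        exact lintegral_mono_ae ((withDensity_absolutelyContinuous μ _).ae_le
          (h.mono fun s hs => rpow_le_rpow hs hp0.le))
    _ ≤ (∫⁻ s, v s ^ p ∂ν) ^ (1 / p) + (∫⁻ s, g s ^ p ∂ν) ^ (1 / p) :=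
        ENNReal.lintegral_Lp_add_le hv.aemeasurable hg.aemeasurable hp
    _ = _ := by
        simp_rw [hgp]
        rw [← hν (hv.pow_const p), ← hν (measurable_resIntegral hκm hκ 0 (hu₀.pow_const p)),
          resIntegral_resIntegral_zero hκm hκ (hu₀.pow_const p)]

lemma resIntegral_eq_add_succ (hκm : Measurable (uncurry κ))
    (hκ : ∀ ⦃t s⦄, ¬ s ≤ t → κ t s = 0) {u₀ v : I → ℝ≥0∞} (hu₀ : Measurable u₀) (hv : Measurable v)
    (h : ∀ᵐ s ∂μ, u₀ s = v s + resIntegral μ κ 0 u₀ s) (n : ℕ) (t : I) :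
    resIntegral μ κ n u₀ t = resIntegral μ κ n v t + resIntegral μ κ (n + 1) u₀ t := by
  have hm : Measurable fun s => res (· ≤ ·) μ κ n t s * v s :=
    (measurable_res_s3 hκm hκ n).of_uncurry_left.mul hv
  rw [← resIntegral_resIntegral_zero hκm hκ hu₀, resIntegral, resIntegral, resIntegral,
    ← lintegral_add_left hm]
  exact lintegral_congr_ae (h.mono fun s hs => by simp only [hs, mul_add])

end Resolvent

theorem resolvent_inequality_general {I : Type*} [MeasurableSpace I] [Preorder I]
    (hΔ : MeasurableSet {q : I × I | q.2 ≤ q.1})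
    (μ : Measure I) [SigmaFinite μ]
    (k : I → I → ℝ≥0∞)
    (hk : Measurable fun q : {q : I × I // q.2 ≤ q.1} => k q.1.1 q.1.2)
    (p : ℝ) (hp : 1 ≤ p)
    (J : Set I) (hJ : μ Jᶜ = 0)
    (u u₀ v : I → ℝ≥0∞) (hu₀ : Measurable u₀) (hv : Measurable v)
    (hle : ∀ t ∈ J, u₀ t ≤ u t)
    (hineq : ∀ t ∈ J,
      u t ≤ v t + (∫⁻ s in {s : I | s ≤ t}, k t s ^ p * u₀ s ^ p ∂μ) ^ (1 / p))
    (hlim : ∀ t ∈ J,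
      Tendsto (fun n : ℕ =>
          ∫⁻ s in {s : I | s ≤ t}, res (· ≤ ·) μ (fun a b => k a b ^ p) n t s * u₀ s ^ p ∂μ)
        atTop (nhds 0)) :
    (∀ t ∈ J,
      u t ≤ v t + ∑' n : ℕ,
        (∫⁻ s in {s : I | s ≤ t},
          res (· ≤ ·) μ (fun a b => k a b ^ p) n t s * v s ^ p ∂μ) ^ (1 / p)) ∧
    (p = 1 →
      (∀ t ∈ J, u t = v t + ∫⁻ s in {s : I | s ≤ t}, k t s * u₀ s ∂μ) →
      (∀ t ∈ J, u₀ t = u t) →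
      ∀ t ∈ J,
        u t = v t + ∑' n : ℕ,
          (∫⁻ s in {s : I | s ≤ t},
            res (· ≤ ·) μ (fun a b => k a b ^ p) n t s * v s ^ p ∂μ) ^ (1 / p)) := by
  have hp0 : 0 < p := zero_lt_one.trans_le hp
  obtain ⟨κ, hκm, hκ, hkκ⟩ :=
    exists_measurable_extend_zero (k := fun a b => k a b ^ p) hΔ (hk.pow_const p)
  have hres := setLIntegral_res_eq_resIntegral (μ := μ) hΔ hκ hkκ
  have hJae : ∀ᵐ s ∂μ, s ∈ J := hJ
  simp_rw [hres] at hlim ⊢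
  have hbase : ∀ t ∈ J, u t ≤ v t + resIntegral μ κ 0 (u₀ · ^ p) t ^ (1 / p) := fun t ht =>
    (hineq t ht).trans_eq (by rw [← hres]; rfl)
  have hu₀_le : ∀ᵐ s ∂μ, u₀ s ≤ v s + resIntegral μ κ 0 (u₀ · ^ p) s ^ (1 / p) :=
    hJae.mono fun s hs => (hle s hs).trans (hbase s hs)
  refine ⟨fun t ht => (hbase t ht).trans (add_le_add_right ?_ _), fun hp1 heq hu₀u t ht => ?_⟩
  · refine ENNReal.le_tsum_of_le_add_succ
      (rpow_resIntegral_le_add_succ hκm hκ hp hu₀ hv hu₀_le · t) ?_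
    simpa [hp0] using (hlim t ht).ennrpow_const (1 / p)
  · subst hp1
    simp only [ENNReal.rpow_one, div_one] at hlim ⊢
    have hfix : ∀ t ∈ J, u₀ t = v t + resIntegral μ κ 0 u₀ t := fun t ht => by
      rw [hu₀u t ht, heq t ht, ← hres]
      simp only [ENNReal.rpow_one]
      rfl
    rw [← hu₀u t ht, hfix t ht]
    exact congrArg _ (ENNReal.eq_tsum_of_eq_add_succ
      (resIntegral_eq_add_succ hκm hκ hu₀ hv (hJae.mono hfix) · t) (hlim t ht))

/-- **Resolvent inequality** (Corollary 1 of the paper): if `J` has full measure,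
`u₀ ≤ u` on `J`, `u t ≤ v t + (∫_{I(t)} k(t,s)^p u₀(s)^p μ(ds))^{1/p}` on `J` and
`∫_{I(t)} R_{k^p,μ,n}(t,s) u₀(s)^p μ(ds) → 0` for every `t ∈ J`, then
`u t ≤ v t + ∑_{n=1}^∞ (∫_{I(t)} R_{k^p,μ,n}(t,s) v(s)^p μ(ds))^{1/p}` on `J`;
moreover equality holds if `p = 1`, the assumed inequality is an identity and `u₀ = u`
on `J` (the summation index is shifted by one: `res … n = R_{·,n+1}`). -/
theorem resolvent_inequality {I : Type*} [MeasurableSpace I] [Preorder I]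
    (hΔ : MeasurableSet {q : I × I | q.2 ≤ q.1})
    (μ : Measure I) [SigmaFinite μ]
    (k : I → I → ℝ≥0∞)
    (hk : Measurable fun q : {q : I × I // q.2 ≤ q.1} => k q.1.1 q.1.2)
    (p : ℝ) (hp : 1 ≤ p)
    (J : Set I) (hJ : μ Jᶜ = 0)
    (u u₀ v : I → ℝ≥0∞) (hu : Measurable u) (hu₀ : Measurable u₀) (hv : Measurable v)
    (hle : ∀ t ∈ J, u₀ t ≤ u t)
    (hineq : ∀ t ∈ J,
      u t ≤ v t + (∫⁻ s in {s : I | s ≤ t}, k t s ^ p * u₀ s ^ p ∂μ) ^ (1 / p))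
    (hlim : ∀ t ∈ J,
      Tendsto (fun n : ℕ =>
          ∫⁻ s in {s : I | s ≤ t}, res (· ≤ ·) μ (fun a b => k a b ^ p) n t s * u₀ s ^ p ∂μ)
        atTop (nhds 0)) :
    (∀ t ∈ J,
      u t ≤ v t + ∑' n : ℕ,
        (∫⁻ s in {s : I | s ≤ t},
          res (· ≤ ·) μ (fun a b => k a b ^ p) n t s * v s ^ p ∂μ) ^ (1 / p)) ∧
    (p = 1 →
      (∀ t ∈ J, u t = v t + ∫⁻ s in {s : I | s ≤ t}, k t s * u₀ s ∂μ) →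
      (∀ t ∈ J, u₀ t = u t) →
      ∀ t ∈ J,
        u t = v t + ∑' n : ℕ,
          (∫⁻ s in {s : I | s ≤ t},
            res (· ≤ ·) μ (fun a b => k a b ^ p) n t s * v s ^ p ∂μ) ^ (1 / p)) :=
  resolvent_inequality_general hΔ μ k hk p hp J hJ u u₀ v hu₀ hv hle hineq hlim
end

section
/- For any non-negative kernel k on I, a σ-finite measure μ on 𝓘, every m ≥ 1 and all s, t ∈ I with s ≤ t, the resolvent R_{k,μ} := Σ_{n=1}^∞ R_{k,μ,n} satisfies R_{k,μ}(t,s) = R_{k,μ,1}(t,s) + ⋯ + R_{k,μ,m}(t,s) + ∫_{[s,t]} R_{k,μ,m}(t,s̃) R_{k,μ}(s̃,s) μ(ds̃). In particular (m = 1), R_{k,μ}(t,s) = k(t,s) + ∫_{[s,t]} k(t,s̃) R_{k,μ}(s̃,s) μ(ds̃), i.e. for each s ∈ I the function R_{k,μ}(·,s) solves the generalised linear Volterra integral equation with kernel k. -/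
open MeasureTheory ENNReal

/-! The resolvent sequence obeys the composition rule
`res (m + n + 1) t s = ∫_{[s,t]} res m t u * res n u s μ(du)`; in the induction on `m` the step is
Tonelli's theorem on the triangle `s ≤ u ≤ v ≤ t`. Summing over `n` and exchanging sum and
integral (monotone convergence) gives the identity. As `k` is only measurable on `Δ`, it is first
replaced by its extension by zero, which has the same resolvent sequence on `Δ`. -/

open Set

namespace Resolvent

theorem setLIntegral_setLIntegral_eq_lintegral_setLIntegral {α : Type*} [MeasurableSpace α]
    {μ : Measure α} {A : Set α} (hA : MeasurableSet A) (B : α → Set α) (F : α → α → ℝ≥0∞) :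
    ∫⁻ v in A, ∫⁻ u in B v, F v u ∂μ ∂μ = ∫⁻ v, ∫⁻ u in {u | v ∈ A ∧ u ∈ B v}, F v u ∂μ ∂μ := by
  rw [← lintegral_indicator hA]
  congr 1 with v
  by_cases hv : v ∈ A <;> simp [hv]

variable {I : Type*} [MeasurableSpace I] [Preorder I]

theorem measurableSet_le (hΔ : MeasurableSet {q : I × I | q.2 ≤ q.1}) {α : Type*}
    [MeasurableSpace α] {f g : α → I} (hf : Measurable f) (hg : Measurable g) :
    MeasurableSet {x | f x ≤ g x} :=
  (hg.prodMk hf) hΔ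

theorem measurableSet_Icc (hΔ : MeasurableSet {q : I × I | q.2 ≤ q.1}) (s t : I) :
    MeasurableSet (Icc s t) :=
  (measurableSet_le hΔ measurable_const measurable_id).inter
    (measurableSet_le hΔ measurable_id measurable_const)

open Classical in
theorem measurable_uncurry_ite_le (hΔ : MeasurableSet {q : I × I | q.2 ≤ q.1})
    {k : I → I → ℝ≥0∞} (hk : Measurable fun q : {q : I × I // q.2 ≤ q.1} => k q.1.1 q.1.2) :
    Measurable (Function.uncurry fun t s => if s ≤ t then k t s else 0) := by
  convert Measurable.dite (s := {q : I × I | q.2 ≤ q.1}) hk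
    (measurable_const (a := (0 : ℝ≥0∞))) hΔ using 1
  ext q
  simp [Function.uncurry, dite_eq_ite]

theorem lintegral_Icc_lintegral_Icc_comm (hΔ : MeasurableSet {q : I × I | q.2 ≤ q.1})
    {μ : Measure I} [SFinite μ] {F : I → I → ℝ≥0∞} (hF : Measurable (Function.uncurry F))
    (s t : I) :
    ∫⁻ v in Icc s t, ∫⁻ u in Icc s v, F v u ∂μ ∂μ
      = ∫⁻ u in Icc s t, ∫⁻ v in Icc u t, F v u ∂μ ∂μ := by
  set T := {p : I × I | s ≤ p.2 ∧ p.2 ≤ p.1 ∧ p.1 ≤ t}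
  have hT : MeasurableSet T :=
    (measurableSet_le hΔ measurable_const measurable_snd).inter
      ((measurableSet_le hΔ measurable_snd measurable_fst).inter
        (measurableSet_le hΔ measurable_fst measurable_const))
  have hleft (v : I) : {u | v ∈ Icc s t ∧ u ∈ Icc s v} = Prod.mk v ⁻¹' T := by
    ext u
    simp only [mem_Icc, mem_preimage, T]
    exact ⟨fun h => ⟨h.2.1, h.2.2, h.1.2⟩, fun h => ⟨⟨h.1.trans h.2.1, h.2.2⟩, h.1, h.2.1⟩⟩
  have hright (u : I) : {v | u ∈ Icc s t ∧ v ∈ Icc u t} = (fun v => (v, u)) ⁻¹' T := by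
    ext v
    simp only [mem_Icc, mem_preimage, T]
    exact ⟨fun h => ⟨h.1.1, h.2⟩, fun h => ⟨⟨h.1, h.2.1.trans h.2.2⟩, h.2.1, h.2.2⟩⟩
  rw [setLIntegral_setLIntegral_eq_lintegral_setLIntegral (measurableSet_Icc hΔ s t),
    setLIntegral_setLIntegral_eq_lintegral_setLIntegral (measurableSet_Icc hΔ s t)]
  simp_rw [hleft, hright]
  simp_rw [← lintegral_indicator (measurable_prodMk_left hT),
    ← lintegral_indicator (measurable_prodMk_right hT)]
  exact lintegral_lintegral_swap (hF.indicator hT).aemeasurable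

variable {μ : Measure I} {k : I → I → ℝ≥0∞}

theorem res_succ (n : ℕ) (t s : I) :
    res (· ≤ ·) μ k (n + 1) t s = ∫⁻ u in Icc s t, k t u * res (· ≤ ·) μ k n u s ∂μ :=
  rfl

theorem res_congr_of_le (hΔ : MeasurableSet {q : I × I | q.2 ≤ q.1}) {k' : I → I → ℝ≥0∞}
    (h : ∀ ⦃s t⦄, s ≤ t → k t s = k' t s) :
    ∀ (n : ℕ) ⦃s t : I⦄, s ≤ t → res (· ≤ ·) μ k n t s = res (· ≤ ·) μ k' n t s
  | 0, _, _, hst => h hst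
  | n + 1, s, t, _ => setLIntegral_congr_fun (measurableSet_Icc hΔ s t) fun u hu => by
      rw [h hu.2, res_congr_of_le hΔ h n hu.1]

theorem measurable_res (hΔ : MeasurableSet {q : I × I | q.2 ≤ q.1}) [SFinite μ]
    (hk : Measurable (Function.uncurry k)) (n : ℕ) :
    Measurable (Function.uncurry (res (· ≤ ·) μ k n)) := by
  induction n with
  | zero => exact hk
  | succ n ih =>
    have hS : MeasurableSet {p : (I × I) × I | p.1.2 ≤ p.2 ∧ p.2 ≤ p.1.1} :=
      (measurableSet_le hΔ measurable_fst.snd measurable_snd).inter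
        (measurableSet_le hΔ measurable_snd measurable_fst.fst)
    have hintegrand := ((hk.comp (measurable_fst.fst.prodMk measurable_snd)).mul
      (ih.comp (measurable_snd.prodMk measurable_fst.snd))).indicator hS
    convert hintegrand.lintegral_prod_right' (ν := μ) using 2 with q
    exact (lintegral_indicator (measurableSet_Icc hΔ q.2 q.1) _).symm

theorem res_add_add_one (hΔ : MeasurableSet {q : I × I | q.2 ≤ q.1}) [SFinite μ]
    (hk : Measurable (Function.uncurry k)) (n : ℕ) :
    ∀ (m : ℕ) (s t : I), res (· ≤ ·) μ k (m + n + 1) t s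
      = ∫⁻ u in Icc s t, res (· ≤ ·) μ k m t u * res (· ≤ ·) μ k n u s ∂μ
  | 0, s, t => by rw [zero_add]; rfl
  | m + 1, s, t => by
    have hR := measurable_res (μ := μ) hΔ hk
    calc res (· ≤ ·) μ k (m + 1 + n + 1) t s
        = ∫⁻ v in Icc s t, k t v * res (· ≤ ·) μ k (m + n + 1) v s ∂μ := by
          rw [show m + 1 + n + 1 = m + n + 1 + 1 by omega, res_succ]
      _ = ∫⁻ v in Icc s t, ∫⁻ u in Icc s v,
            k t v * (res (· ≤ ·) μ k m v u * res (· ≤ ·) μ k n u s) ∂μ ∂μ := by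
          congr 1 with v
          rw [res_add_add_one hΔ hk n m s v, lintegral_const_mul]
          exact (hR m).of_uncurry_left.mul (hR n).of_uncurry_right
      _ = ∫⁻ u in Icc s t, ∫⁻ v in Icc u t,
            k t v * (res (· ≤ ·) μ k m v u * res (· ≤ ·) μ k n u s) ∂μ ∂μ := by
          apply lintegral_Icc_lintegral_Icc_comm hΔ
          exact (hk.comp (measurable_const.prodMk measurable_fst)).mul
            ((hR m).mul ((hR n).of_uncurry_right.comp measurable_snd))
      _ = ∫⁻ u in Icc s t, res (· ≤ ·) μ k (m + 1) t u * res (· ≤ ·) μ k n u s ∂μ := by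
          congr 1 with u
          simp_rw [res_succ, ← mul_assoc]
          exact lintegral_mul_const _ (hk.of_uncurry_left.mul (hR m).of_uncurry_right)

theorem tsum_res_eq_sum_add_lintegral (hΔ : MeasurableSet {q : I × I | q.2 ≤ q.1})
    [SFinite μ] (hk : Measurable (Function.uncurry k)) (m : ℕ) (s t : I) :
    ∑' n, res (· ≤ ·) μ k n t s
      = ∑ i ∈ Finset.range (m + 1), res (· ≤ ·) μ k i t s
        + ∫⁻ u in Icc s t, res (· ≤ ·) μ k m t u * ∑' n, res (· ≤ ·) μ k n u s ∂μ := by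
  have hR := measurable_res (μ := μ) hΔ hk
  rw [← ENNReal.summable.sum_add_tsum_nat_add' (k := m + 1)]
  congr 1
  calc ∑' i, res (· ≤ ·) μ k (i + (m + 1)) t s
      = ∑' i, ∫⁻ u in Icc s t, res (· ≤ ·) μ k m t u * res (· ≤ ·) μ k i u s ∂μ :=
        tsum_congr fun i => by
          rw [← res_add_add_one hΔ hk]
          congr 1
          omega
    _ = ∫⁻ u in Icc s t, ∑' i, res (· ≤ ·) μ k m t u * res (· ≤ ·) μ k i u s ∂μ :=
        (lintegral_tsum fun i =>
          ((hR m).of_uncurry_left.mul (hR i).of_uncurry_right).aemeasurable).symm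
    _ = _ := by simp_rw [ENNReal.tsum_mul_left]

end Resolvent

open Resolvent in
/-- The resolvent `R_{k,μ} = ∑_{n=1}^∞ R_{k,μ,n}` satisfies, for every `m ≥ 1`
(here `m + 1`, i.e. `res … m = R_{·,m+1}`) and all `s ≤ t`,
`R_{k,μ}(t,s) = R_{k,μ,1}(t,s) + ⋯ + R_{k,μ,m}(t,s)
  + ∫_{[s,t]} R_{k,μ,m}(t,u) R_{k,μ}(u,s) μ(du)`;
in particular (`m = 1`), `R_{k,μ}(·,s)` solves the generalised linear Volterra
integral equation `R_{k,μ}(t,s) = k(t,s) + ∫_{[s,t]} k(t,u) R_{k,μ}(u,s) μ(du)`. -/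
theorem resolvent_volterra_equation {I : Type*} [MeasurableSpace I] [Preorder I]
    (hΔ : MeasurableSet {q : I × I | q.2 ≤ q.1})
    (μ : Measure I) [SigmaFinite μ]
    (k : I → I → ℝ≥0∞)
    (hk : Measurable fun q : {q : I × I // q.2 ≤ q.1} => k q.1.1 q.1.2) :
    (∀ m : ℕ, ∀ s t : I, s ≤ t →
      (∑' n : ℕ, res (· ≤ ·) μ k n t s)
        = ∑ i ∈ Finset.range (m + 1), res (· ≤ ·) μ k i t s
          + ∫⁻ u in {u : I | s ≤ u ∧ u ≤ t},
              res (· ≤ ·) μ k m t u * (∑' n : ℕ, res (· ≤ ·) μ k n u s) ∂μ) ∧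
    (∀ s t : I, s ≤ t →
      (∑' n : ℕ, res (· ≤ ·) μ k n t s)
        = k t s + ∫⁻ u in {u : I | s ≤ u ∧ u ≤ t},
            k t u * (∑' n : ℕ, res (· ≤ ·) μ k n u s) ∂μ) := by
  classical
  set K : I → I → ℝ≥0∞ := fun t s => if s ≤ t then k t s else 0
  have hK : Measurable (Function.uncurry K) := measurable_uncurry_ite_le hΔ hk
  have hkK : ∀ n ⦃s t⦄, s ≤ t → res (· ≤ ·) μ k n t s = res (· ≤ ·) μ K n t s :=
    res_congr_of_le hΔ fun s t hst => (if_pos hst).symm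
  have hkK_tsum ⦃s t : I⦄ (hst : s ≤ t) :
      ∑' n, res (· ≤ ·) μ k n t s = ∑' n, res (· ≤ ·) μ K n t s :=
    tsum_congr fun n => hkK n hst
  refine (and_iff_left_of_imp fun main s t hst => by simpa [res] using main 0 s t hst).2
    fun m s t hst => ?_
  rw [hkK_tsum hst, tsum_res_eq_sum_add_lintegral hΔ hK m s t,
    Finset.sum_congr rfl fun i _ => hkK i hst]
  congr 1
  exact setLIntegral_congr_fun (measurableSet_Icc hΔ s t) fun u hu => by
    rw [hkK m hu.2, hkK_tsum hu.1]
end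

section
/- Let I be a non-degenerate interval in ℝ with its Borel σ-field, ordered by the usual order, p ≥ 1, and μ a σ-finite Borel measure on I with μ({t}) = 0 for all t ∈ I. Let k be a non-negative kernel on I satisfying the monotonicity condition k(s̃,s) ≤ k(t,s) for all s ≤ s̃ ≤ t in I, and suppose ∫_{[s,t]} k(t,s̃)^p μ(ds̃) < ∞ for all s ≤ t in I. Then for every n ≥ 1 and all s ≤ t in I: R_{k^p,μ,n}(t,s) ≤ (k(t,s)^p / (n−1)!) · (∫_{[s,t]} k(t,s̃)^p μ(ds̃))^{n−1}. -/
/-!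
Put `ρ := k(t,·)^p μ` restricted to `[s,t]` and `F u := ρ (-∞, u]`. Using the induction hypothesis
at `(u, s)` and the monotonicity of `k`, the bound reduces to `∫_{(-∞,t]} F^n dρ = F(t)^{n+1}/(n+1)`,
i.e. `∫ F^n dF = F^{n+1}/(n+1)` for the distribution function of an atomless measure. That identity
follows by induction on `n`: split `F(t) = F(u) + ρ(u,t]` inside `F(t) ∫ F^n dρ` and apply Tonelli
to the second term; since `ρ` has no atoms, it becomes `∫_{(-∞,t]} (∫_{(-∞,v]} F^n dρ) dρ(v)`.
-/

open MeasureTheory ENNReal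

open Set

theorem ENNReal.div_factorial_mul_div_succ (a b : ℝ≥0∞) (n : ℕ) :
    a / n.factorial * (b / (n + 1)) = a / (n + 1).factorial * b := by
  rw [Nat.factorial_succ, Nat.cast_mul, div_eq_mul_inv, div_eq_mul_inv, div_eq_mul_inv,
    ENNReal.mul_inv (by simp) (by simp)]
  push_cast
  ring

section LinearOrder

variable {α : Type*} [LinearOrder α] [TopologicalSpace α] [OrderClosedTopology α]
  [SecondCountableTopology α] [MeasurableSpace α] [BorelSpace α]

theorem lintegral_mul_measure_Ioi {ρ ν : Measure α} [SFinite ρ] [SFinite ν] {f : α → ℝ≥0∞}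
    (hf : Measurable f) :
    ∫⁻ u, f u * ν (Ioi u) ∂ρ = ∫⁻ v, ∫⁻ u in Iio v, f u ∂ρ ∂ν := by
  set g : α × α → ℝ≥0∞ := {q | q.1 < q.2}.indicator fun q => f q.1
  have hg : Measurable g := (hf.comp measurable_fst).indicator measurableSet_lt'
  calc ∫⁻ u, f u * ν (Ioi u) ∂ρ = ∫⁻ u, ∫⁻ v, g (u, v) ∂ν ∂ρ := by
        refine lintegral_congr fun u => ?_
        rw [← lintegral_indicator_const measurableSet_Ioi]
        rfl
    _ = ∫⁻ v, ∫⁻ u, g (u, v) ∂ρ ∂ν := lintegral_lintegral_swap hg.aemeasurable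
    _ = ∫⁻ v, ∫⁻ u in Iio v, f u ∂ρ ∂ν := by
        refine lintegral_congr fun v => ?_
        rw [← lintegral_indicator measurableSet_Iio]
        rfl

theorem mul_setLIntegral_measure_Iic_pow (ρ : Measure α) [SFinite ρ] [NullSingletonClass ρ]
    (n : ℕ) (t : α) :
    (n + 1) * ∫⁻ u in Iic t, ρ (Iic u) ^ n ∂ρ = ρ (Iic t) ^ (n + 1) := by
  induction n generalizing t with
  | zero => simp
  | succ n ih =>
    have hG : ∀ m : ℕ, Measurable fun u => ρ (Iic u) ^ m := fun m =>
      (Monotone.measurable fun u v huv => measure_mono (Iic_subset_Iic.2 huv)).pow_const m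
    have hsplit : ∀ u ∈ Iic t, ρ (Iic t) = ρ (Iic u) + ρ.restrict (Iic t) (Ioi u) := by
      intro u hu
      rw [Measure.restrict_apply measurableSet_Ioi, Ioi_inter_Iic, ← measure_union
        (Iic_disjoint_Ioc le_rfl) measurableSet_Ioc, Iic_union_Ioc_eq_Iic hu]
    have hfubini : ∫⁻ u in Iic t, ρ (Iic u) ^ n * ρ.restrict (Iic t) (Ioi u) ∂ρ
        = ∫⁻ v in Iic t, ∫⁻ u in Iic v, ρ (Iic u) ^ n ∂ρ ∂ρ := by
      rw [lintegral_mul_measure_Ioi (hG n)]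
      refine setLIntegral_congr_fun measurableSet_Iic fun v hv => ?_
      rw [Measure.restrict_restrict_of_subset (Iio_subset_Iic_self.trans (Iic_subset_Iic.2 hv))]
      exact setLIntegral_congr Iio_ae_eq_Iic
    calc ((n + 1 : ℕ) + 1) * ∫⁻ u in Iic t, ρ (Iic u) ^ (n + 1) ∂ρ
        = (n + 1) * ∫⁻ u in Iic t, ρ (Iic u) ^ (n + 1) ∂ρ
          + ∫⁻ v in Iic t, (n + 1) * ∫⁻ u in Iic v, ρ (Iic u) ^ n ∂ρ ∂ρ := by
          simp only [ih, Nat.cast_add, Nat.cast_one]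
          ring
      _ = (n + 1) * ∫⁻ u in Iic t, ρ (Iic u) ^ n * ρ (Iic t) ∂ρ := by
          rw [lintegral_const_mul' _ _ (by finiteness), ← hfubini, ← mul_add,
            ← lintegral_add_left (hG _)]
          congr 1
          refine setLIntegral_congr_fun measurableSet_Iic fun u hu => ?_
          rw [hsplit u hu, mul_add, pow_succ]
      _ = ρ (Iic t) ^ (n + 1 + 1) := by
          rw [lintegral_mul_const _ (hG n), ← mul_assoc, ih, ← pow_succ]

theorem res_le_div_factorial_mul_pow (μ : Measure α) [SFinite μ] [NullSingletonClass μ]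
    {K : α → α → ℝ≥0∞} (hK : Measurable fun q : {q : α × α // q.2 ≤ q.1} => K q.1.1 q.1.2)
    (hmono : ∀ s s' t : α, s ≤ s' → s' ≤ t → K s' s ≤ K t s) (n : ℕ) (s t : α) :
    res (· ≤ ·) μ K n t s ≤ K t s / n.factorial * (∫⁻ u in Icc s t, K t u ∂μ) ^ n := by
  induction n generalizing t with
  | zero => simp [res]
  | succ n ih =>
    set ρ := (μ.restrict (Icc s t)).withDensity (K t)
    have hKt : AEMeasurable (K t) (μ.restrict (Icc s t)) :=
      aemeasurable_restrict_of_measurable_subtype measurableSet_Icc <|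
        hK.comp ((measurable_const.prodMk measurable_subtype_coe).subtype_mk
          (h := fun u : Icc s t => u.2.2))
    have hρ : ∀ u ≤ t, ρ (Iic u) = ∫⁻ v in Icc s u, K t v ∂μ := by
      intro u hu
      rw [withDensity_apply _ measurableSet_Iic, Measure.restrict_restrict measurableSet_Iic]
      congr 2
      ext v
      simp only [mem_inter_iff, mem_Iic, mem_Icc]
      grind
    have hG : Measurable fun u => ρ (Iic u) ^ n :=
      (Monotone.measurable fun u v huv => measure_mono (Iic_subset_Iic.2 huv)).pow_const n
    have hρt : ρ.restrict (Iic t) = ρ := by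
      rw [restrict_withDensity measurableSet_Iic, Measure.restrict_restrict measurableSet_Iic,
        inter_eq_right.2 Icc_subset_Iic_self]
    calc res (· ≤ ·) μ K (n + 1) t s = ∫⁻ u in Icc s t, K t u * res (· ≤ ·) μ K n u s ∂μ := rfl
      _ ≤ ∫⁻ u in Icc s t, K t s / n.factorial * (K t u * ρ (Iic u) ^ n) ∂μ := by
          refine setLIntegral_mono' measurableSet_Icc fun w hw => ?_
          rw [mul_left_comm, hρ w hw.2]
          gcongr
          refine (ih w).trans ?_
          gcongr ?_ / _ * ?_ ^ _
          · exact hmono s w t hw.1 hw.2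
          · exact setLIntegral_mono' measurableSet_Icc fun v hv => hmono v w t hv.2 hw.2
      _ = K t s / n.factorial * ∫⁻ u in Iic t, ρ (Iic u) ^ n ∂ρ := by
          rw [lintegral_const_mul'' (f := fun u => K t u * ρ (Iic u) ^ n) _
            (hKt.mul hG.aemeasurable), hρt,
            lintegral_withDensity_eq_lintegral_mul₀ hKt hG.aemeasurable]
          rfl
      _ = K t s / (n + 1).factorial * (∫⁻ u in Icc s t, K t u ∂μ) ^ (n + 1) := by
          rw [← ENNReal.div_factorial_mul_div_succ, ← hρ t le_rfl]
          congr 1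
          rw [ENNReal.eq_div_iff (by simp) (by simp), mul_setLIntegral_measure_Iic_pow]

end LinearOrder

theorem regular_kernel_resolvent_bound_general
    (S : Set ℝ)
    (μ : Measure S) [SigmaFinite μ] (hatom : ∀ x : S, μ {x} = 0)
    (p : ℝ) (hp : 1 ≤ p)
    (k : S → S → ℝ≥0∞)
    (hk : Measurable fun q : {q : S × S // q.2 ≤ q.1} => k q.1.1 q.1.2)
    (hmono : ∀ s s' t : S, s ≤ s' → s' ≤ t → k s' s ≤ k t s) :
    ∀ n : ℕ, ∀ s t : S, s ≤ t →
      res (· ≤ ·) μ (fun a b => k a b ^ p) n t s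
        ≤ k t s ^ p / (Nat.factorial n : ℝ≥0∞)
            * (∫⁻ u in {u : S | s ≤ u ∧ u ≤ t}, k t u ^ p ∂μ) ^ n := by
  have : NullSingletonClass μ := ⟨hatom⟩
  intro n s t _
  exact res_le_div_factorial_mul_pow μ (hk.pow_const p)
    (fun s s' t h₁ h₂ => ENNReal.rpow_le_rpow (hmono s s' t h₁ h₂) (by linarith)) n s t

/-- **Regular kernels on intervals** (Example 4 of the paper, estimate (12)): if `I` is a
non-degenerate interval of `ℝ`, `μ` a σ-finite atomless Borel measure on it, and `k` a
non-negative kernel satisfying the monotonicity condition and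
`∫_{[s,t]} k(t,u)^p μ(du) < ∞` for `s ≤ t`, then
`R_{k^p,μ,n}(t,s) ≤ k(t,s)^p / (n-1)! * (∫_{[s,t]} k(t,u)^p μ(du))^{n-1}` for `n ≥ 1`
(the index is shifted by one: `res … n = R_{·,n+1}`). -/
theorem regular_kernel_resolvent_bound
    (S : Set ℝ) (hconn : S.OrdConnected) (hnd : ∃ a ∈ S, ∃ b ∈ S, a ≠ b)
    (μ : Measure S) [SigmaFinite μ] (hatom : ∀ x : S, μ {x} = 0)
    (p : ℝ) (hp : 1 ≤ p)
    (k : S → S → ℝ≥0∞)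
    (hk : Measurable fun q : {q : S × S // q.2 ≤ q.1} => k q.1.1 q.1.2)
    (hmono : ∀ s s' t : S, s ≤ s' → s' ≤ t → k s' s ≤ k t s)
    (hfin : ∀ s t : S, s ≤ t → (∫⁻ u in {u : S | s ≤ u ∧ u ≤ t}, k t u ^ p ∂μ) < ∞) :
    ∀ n : ℕ, ∀ s t : S, s ≤ t →
      res (· ≤ ·) μ (fun a b => k a b ^ p) n t s
        ≤ k t s ^ p / (Nat.factorial n : ℝ≥0∞)
            * (∫⁻ u in {u : S | s ≤ u ∧ u ≤ t}, k t u ^ p ∂μ) ^ n :=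
  regular_kernel_resolvent_bound_general S μ hatom p hp k hk hmono
end

section
/- Let I be a non-degenerate interval in ℝ with its Borel σ-field, ordered by the usual order, p ≥ 1, and μ a σ-finite Borel measure on I with μ({t}) = 0 for all t ∈ I. Let k be a non-negative kernel on I satisfying the monotonicity condition k(s̃,s) ≤ k(t,s) for all s ≤ s̃ ≤ t in I, and suppose ∫_{[s,t]} k(t,s̃)^p μ(ds̃) < ∞ for all s ≤ t in I. Then for each t ∈ I the series function satisfies I_{k,μ,p}(t) ≤ Σ_{n=1}^∞ (1/n!)^{1/p} (∫_{I(t)} k(t,s)^p μ(ds))^{n/p}, and the right-hand side is finite whenever ∫_{I(t)} k(t,s)^p μ(ds) < ∞. -/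
open MeasureTheory ENNReal

/-!
Fix `t`, put `g s = k(t,s)^p` and let `ν` be the measure `g μ` on `I(t)`. By monotonicity of `k`
the kernel `k^p` is dominated by `g(s)` on `s ≤ u ≤ t`, and induction on `n` gives
`res n u s ≤ g(s) ν([s,u])^n / n!`. Each step integrates `ν([s,v])^n` against `ν` over `[s,u]`,
and for a finite atomless measure `∫ ν(Iic x)^m dν = ν(univ)^(m+1) / (m+1)`: by Fubini,
`∫ ν(Iic y)^m ν(Ici y) dν(y) = ∫ (∫_{Iic x} ν(Iic y)^m dν(y)) dν(x)`, the inner integral is known by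
induction on `m`, and `ν(Ici y) + ν(Iic y) = ν(univ)` because there are no atoms. A last
integration over `I(t)` gives `∫_{I(t)} res n t s μ(ds) ≤ C^(n+1) / (n+1)!` with
`C = ∫_{I(t)} k(t,s)^p μ(ds)`. Finally `(C^n / n!)^(1/p) ≤ exp(2^p C)^(1/p) 2^(-n)`, so the bound
is finite when `C` is.
-/

open Set
open scoped Nat

variable {α : Type*} [LinearOrder α] [TopologicalSpace α] [OrderClosedTopology α]
  [MeasurableSpace α] [BorelSpace α]

theorem measure_Ici_add_measure_Iic (ν : Measure α) [NullSingletonClass ν] (x : α) :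
    ν (Ici x) + ν (Iic x) = ν univ := by
  rw [← measure_congr Iio_ae_eq_Iic, ← compl_Ici, measure_add_measure_compl measurableSet_Ici]

variable [SecondCountableTopology α]

theorem lintegral_mul_measure_Ici (ν : Measure α) [SFinite ν] {f : α → ℝ≥0∞}
    (hf : Measurable f) :
    ∫⁻ y, f y * ν (Ici y) ∂ν = ∫⁻ x, ∫⁻ y in Iic x, f y ∂ν ∂ν := by
  have hmeas : Measurable ({q : α × α | q.1 ≤ q.2}.indicator fun q => f q.1) :=
    (hf.comp measurable_fst).indicator measurableSet_le'
  calc ∫⁻ y, f y * ν (Ici y) ∂ν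
      = ∫⁻ y, ∫⁻ x, {q : α × α | q.1 ≤ q.2}.indicator (fun q => f q.1) (y, x) ∂ν ∂ν := by
        refine lintegral_congr fun y => ?_
        rw [← lintegral_indicator_const measurableSet_Ici]
        rfl
    _ = ∫⁻ x, ∫⁻ y, {q : α × α | q.1 ≤ q.2}.indicator (fun q => f q.1) (y, x) ∂ν ∂ν :=
        lintegral_lintegral_swap hmeas.aemeasurable
    _ = ∫⁻ x, ∫⁻ y in Iic x, f y ∂ν ∂ν := by
        refine lintegral_congr fun x => ?_
        rw [← lintegral_indicator measurableSet_Iic]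
        rfl

theorem lintegral_measure_Iic_pow (ν : Measure α) [IsFiniteMeasure ν] [NullSingletonClass ν]
    (m : ℕ) : (m + 1 : ℝ≥0∞) * ∫⁻ x, ν (Iic x) ^ m ∂ν = ν univ ^ (m + 1) := by
  induction m generalizing ν with
  | zero => simp
  | succ m ih =>
    have hF : Measurable fun x => ν (Iic x) :=
      Monotone.measurable fun _ _ h => measure_mono (Iic_subset_Iic.2 h)
    have hrestrict : ∀ x, (m + 1 : ℝ≥0∞) * ∫⁻ y in Iic x, ν (Iic y) ^ m ∂ν
        = ν (Iic x) ^ (m + 1) := by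
      intro x
      rw [← Measure.restrict_apply_univ, ← ih]
      congr 1
      refine setLIntegral_congr_fun measurableSet_Iic fun y hy => ?_
      rw [Measure.restrict_apply measurableSet_Iic, Iic_inter_Iic, inf_eq_left.2 hy]
    have hfubini : (m + 1 : ℝ≥0∞) * ∫⁻ y, ν (Iic y) ^ m * ν (Ici y) ∂ν
        = ∫⁻ x, ν (Iic x) ^ (m + 1) ∂ν := by
      rw [lintegral_mul_measure_Ici ν (hF.pow_const m), ← lintegral_const_mul' _ _ (by simp)]
      exact lintegral_congr hrestrict
    have hsplit : ∫⁻ y, ν (Iic y) ^ m * ν (Ici y) ∂ν + ∫⁻ y, ν (Iic y) ^ (m + 1) ∂ν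
        = ν univ * ∫⁻ y, ν (Iic y) ^ m ∂ν := by
      rw [← lintegral_add_right _ (hF.pow_const _),
        ← lintegral_const_mul' _ _ (measure_ne_top ν univ)]
      refine lintegral_congr fun y => ?_
      rw [pow_succ, ← mul_add, measure_Ici_add_measure_Iic, mul_comm]
    calc ((m + 1 : ℕ) + 1 : ℝ≥0∞) * ∫⁻ x, ν (Iic x) ^ (m + 1) ∂ν
        = (m + 1) * (∫⁻ y, ν (Iic y) ^ m * ν (Ici y) ∂ν + ∫⁻ y, ν (Iic y) ^ (m + 1) ∂ν) := by
          rw [mul_add, hfubini]; push_cast; ring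
      _ = ν univ ^ (m + 1 + 1) := by rw [hsplit, mul_left_comm, ih]; ring

theorem lintegral_measure_Iic_pow_le (ν : Measure α) [NullSingletonClass ν] (m : ℕ) :
    ∫⁻ x, ν (Iic x) ^ m ∂ν ≤ ν univ ^ (m + 1) / (m + 1) := by
  by_cases hν : ν univ = ∞
  · simp [hν, ENNReal.top_div]
  have : IsFiniteMeasure ν := ⟨lt_top_iff_ne_top.2 hν⟩
  rw [ENNReal.le_div_iff_mul_le (by simp) (by simp), mul_comm, lintegral_measure_Iic_pow]

theorem lintegral_measure_Ici_pow_le (ν : Measure α) [NullSingletonClass ν] (m : ℕ) :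
    ∫⁻ x, ν (Ici x) ^ m ∂ν ≤ ν univ ^ (m + 1) / (m + 1) :=
  have : @NullSingletonClass αᵒᵈ _ ν := ‹_›
  lintegral_measure_Iic_pow_le (α := αᵒᵈ) ν m

theorem inv_factorial_succ_eq_div (n : ℕ) :
    (((n + 1)! : ℕ) : ℝ≥0∞)⁻¹ = (n ! : ℝ≥0∞)⁻¹ / (n + 1) := by
  rw [Nat.factorial_succ, Nat.cast_mul, ENNReal.mul_inv (by simp) (by simp),
    ENNReal.div_eq_inv_mul]
  push_cast
  rfl

section Resolvent

variable (μ : Measure α) [NullSingletonClass μ] {κ : α → α → ℝ≥0∞} {g : α → ℝ≥0∞} {t : α}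

theorem res_le_inv_factorial_mul_pow (hg : AEMeasurable g (μ.restrict (Iic t)))
    (hκ : ∀ s u, s ≤ u → u ≤ t → κ u s ≤ g s) (n : ℕ) {s u : α} (hsu : s ≤ u) (hut : u ≤ t) :
    res (· ≤ ·) μ κ n u s ≤ (n ! : ℝ≥0∞)⁻¹ * g s * (∫⁻ v in Icc s u, g v ∂μ) ^ n := by
  induction n generalizing u with
  | zero => simpa [res] using hκ s u hsu hut
  | succ n ih =>
    set ν := (μ.restrict (Iic t)).withDensity g
    have hν : ∀ v ≤ t, ν (Icc s v) = ∫⁻ w in Icc s v, g w ∂μ := fun v hv => by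
      rw [withDensity_apply _ measurableSet_Icc,
        Measure.restrict_restrict_of_subset (Icc_subset_Iic_self.trans (Iic_subset_Iic.2 hv))]
    have hmeas : Measurable fun v => ν (Icc s v) ^ n :=
      (Monotone.measurable fun _ _ h => measure_mono (Icc_subset_Icc_right h)).pow_const n
    have hmoment : ∫⁻ v in Icc s u, ν (Icc s v) ^ n ∂ν ≤ ν (Icc s u) ^ (n + 1) / (n + 1) := by
      calc ∫⁻ v in Icc s u, ν (Icc s v) ^ n ∂ν
          = ∫⁻ v, ν.restrict (Icc s u) (Iic v) ^ n ∂ν.restrict (Icc s u) := by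
            refine setLIntegral_congr_fun measurableSet_Icc fun v hv => ?_
            have hIcc : Iic v ∩ Icc s u = Icc s v := by
              ext w
              simp only [mem_inter_iff, mem_Iic, mem_Icc]
              exact ⟨fun h => ⟨h.2.1, h.1⟩, fun h => ⟨h.2, h.1, h.2.trans hv.2⟩⟩
            rw [Measure.restrict_apply measurableSet_Iic, hIcc]
        _ ≤ ν (Icc s u) ^ (n + 1) / (n + 1) := by
            simpa using lintegral_measure_Iic_pow_le (ν.restrict (Icc s u)) n
    calc res (· ≤ ·) μ κ (n + 1) u s
        = ∫⁻ v in Icc s u, κ u v * res (· ≤ ·) μ κ n v s ∂μ := rfl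
      _ ≤ ∫⁻ v in Icc s u, g v * ((n ! : ℝ≥0∞)⁻¹ * g s * ν (Icc s v) ^ n) ∂μ := by
          refine setLIntegral_mono' measurableSet_Icc fun v hv => ?_
          rw [hν v (hv.2.trans hut)]
          exact mul_le_mul' (hκ v u hv.2 hut) (ih hv.1 (hv.2.trans hut))
      _ = (n ! : ℝ≥0∞)⁻¹ * g s * ∫⁻ v in Icc s u, ν (Icc s v) ^ n ∂ν := by
          rw [← lintegral_const_mul _ hmeas, setLIntegral_withDensity_eq_lintegral_mul₀ hg
            (hmeas.const_mul _).aemeasurable measurableSet_Icc,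
            Measure.restrict_restrict_of_subset (Icc_subset_Iic_self.trans (Iic_subset_Iic.2 hut))]
          refine lintegral_congr fun v => ?_
          simp only [Pi.mul_apply]
      _ ≤ (n ! : ℝ≥0∞)⁻¹ * g s * (ν (Icc s u) ^ (n + 1) / (n + 1)) := by gcongr
      _ = ((n + 1)! : ℝ≥0∞)⁻¹ * g s * (∫⁻ v in Icc s u, g v ∂μ) ^ (n + 1) := by
          rw [hν u hut, inv_factorial_succ_eq_div, ENNReal.div_eq_inv_mul, ENNReal.div_eq_inv_mul]
          ring

theorem setLIntegral_Iic_res_le (hg : AEMeasurable g (μ.restrict (Iic t)))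
    (hκ : ∀ s u, s ≤ u → u ≤ t → κ u s ≤ g s) (n : ℕ) :
    ∫⁻ s in Iic t, res (· ≤ ·) μ κ n t s ∂μ
      ≤ ((n + 1)! : ℝ≥0∞)⁻¹ * (∫⁻ s in Iic t, g s ∂μ) ^ (n + 1) := by
  set ν := (μ.restrict (Iic t)).withDensity g
  have hν : ∀ s, ν (Ici s) = ∫⁻ w in Icc s t, g w ∂μ := fun s => by
    rw [withDensity_apply _ measurableSet_Ici, Measure.restrict_restrict measurableSet_Ici,
      Ici_inter_Iic]
  have hmeas : Measurable fun s => ν (Ici s) ^ n :=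
    (Antitone.measurable fun _ _ h => measure_mono (Ici_subset_Ici.2 h)).pow_const n
  calc ∫⁻ s in Iic t, res (· ≤ ·) μ κ n t s ∂μ
      ≤ ∫⁻ s in Iic t, g s * ((n ! : ℝ≥0∞)⁻¹ * ν (Ici s) ^ n) ∂μ := by
        refine setLIntegral_mono' measurableSet_Iic fun s hs => ?_
        rw [hν, ← mul_assoc, mul_comm (g s)]
        exact res_le_inv_factorial_mul_pow μ hg hκ n hs le_rfl
    _ = (n ! : ℝ≥0∞)⁻¹ * ∫⁻ s, ν (Ici s) ^ n ∂ν := by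
        rw [← lintegral_const_mul _ hmeas,
          lintegral_withDensity_eq_lintegral_mul₀ hg (hmeas.const_mul _).aemeasurable]
        refine lintegral_congr fun v => ?_
        simp only [Pi.mul_apply]
    _ ≤ (n ! : ℝ≥0∞)⁻¹ * (ν univ ^ (n + 1) / (n + 1)) := by
        gcongr
        exact lintegral_measure_Ici_pow_le ν n
    _ = ((n + 1)! : ℝ≥0∞)⁻¹ * (∫⁻ s in Iic t, g s ∂μ) ^ (n + 1) := by
        rw [withDensity_apply _ MeasurableSet.univ, Measure.restrict_univ,
          inv_factorial_succ_eq_div, ENNReal.div_eq_inv_mul, ENNReal.div_eq_inv_mul]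
        ring

end Resolvent

theorem inv_factorial_mul_pow_le_exp {y : ℝ≥0∞} (hy : y ≠ ∞) (n : ℕ) :
    (n ! : ℝ≥0∞)⁻¹ * y ^ n ≤ ENNReal.ofReal (Real.exp y.toReal) := by
  lift y to NNReal using hy
  have := ENNReal.ofReal_le_ofReal (Real.pow_div_factorial_le_exp y y.2 n)
  rw [ENNReal.ofReal_div_of_pos (by positivity)] at this
  simpa [ENNReal.ofReal_pow, ENNReal.div_eq_inv_mul] using this

theorem tsum_inv_factorial_mul_pow_rpow_lt_top {q : ℝ} (hq : 0 < q) {x : ℝ≥0∞} (hx : x ≠ ∞) :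
    ∑' n : ℕ, ((n ! : ℝ≥0∞)⁻¹ * x ^ n) ^ q < ∞ := by
  set c : ℝ≥0∞ := 2⁻¹ ^ q⁻¹
  have hc0 : c ≠ 0 := by simp [c]
  have hctop : c ≠ ∞ := by simp [c]
  have hcq : c ^ q = 2⁻¹ := by rw [← ENNReal.rpow_mul, inv_mul_cancel₀ hq.ne', ENNReal.rpow_one]
  set E := ENNReal.ofReal (Real.exp (x / c).toReal)
  have hterm : ∀ n : ℕ, ((n ! : ℝ≥0∞)⁻¹ * x ^ n) ^ q ≤ E ^ q * 2⁻¹ ^ n := fun n => by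
    have hx' : x = x / c * c := (ENNReal.div_mul_cancel hc0 hctop).symm
    calc ((n ! : ℝ≥0∞)⁻¹ * x ^ n) ^ q = ((n ! : ℝ≥0∞)⁻¹ * (x / c) ^ n * c ^ n) ^ q := by
          rw [mul_assoc, ← mul_pow, ← hx']
      _ ≤ (E * c ^ n) ^ q := by
          gcongr
          exact inv_factorial_mul_pow_le_exp (ENNReal.div_ne_top hx hc0) n
      _ = E ^ q * 2⁻¹ ^ n := by
          rw [ENNReal.mul_rpow_of_nonneg _ _ hq.le, ← ENNReal.rpow_natCast_mul, mul_comm (n : ℝ),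
            ENNReal.rpow_mul_natCast, hcq, mul_comm]
  calc ∑' n : ℕ, ((n ! : ℝ≥0∞)⁻¹ * x ^ n) ^ q ≤ ∑' n : ℕ, E ^ q * 2⁻¹ ^ n :=
        ENNReal.tsum_le_tsum hterm
    _ = E ^ q * 2 := by rw [ENNReal.tsum_mul_left, ENNReal.tsum_geometric_two]
    _ < ∞ := ENNReal.mul_lt_top (ENNReal.rpow_lt_top_of_nonneg hq.le ENNReal.ofReal_ne_top)
        ENNReal.ofNat_lt_top

theorem regular_kernel_series_function_bound_general
    (S : Set ℝ) (μ : Measure S) (hatom : ∀ x : S, μ {x} = 0)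
    (p : ℝ) (hp : 1 ≤ p)
    (k : S → S → ℝ≥0∞)
    (hk : Measurable fun q : {q : S × S // q.2 ≤ q.1} => k q.1.1 q.1.2)
    (hmono : ∀ s s' t : S, s ≤ s' → s' ≤ t → k s' s ≤ k t s) :
    ∀ t : S,
      (∑' n : ℕ,
        (∫⁻ s in {s : S | s ≤ t},
          res (· ≤ ·) μ (fun a b => k a b ^ p) n t s ∂μ) ^ (1 / p))
        ≤ ∑' n : ℕ,
            ((Nat.factorial (n + 1) : ℝ≥0∞))⁻¹ ^ (1 / p)
              * (∫⁻ s in {s : S | s ≤ t}, k t s ^ p ∂μ) ^ (((n : ℝ) + 1) / p) ∧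
      ((∫⁻ s in {s : S | s ≤ t}, k t s ^ p ∂μ) < ∞ →
        (∑' n : ℕ,
          ((Nat.factorial (n + 1) : ℝ≥0∞))⁻¹ ^ (1 / p)
            * (∫⁻ s in {s : S | s ≤ t}, k t s ^ p ∂μ) ^ (((n : ℝ) + 1) / p)) < ∞) := by
  intro t
  have : NullSingletonClass μ := ⟨hatom⟩
  have hq : 0 < 1 / p := by positivity
  have hsection : Measurable fun s : Iic t => (⟨(t, s.1), s.2⟩ : {q : S × S // q.2 ≤ q.1}) :=
    (measurable_const.prodMk measurable_subtype_coe).subtype_mk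
  have hg : AEMeasurable (fun s => k t s ^ p) (μ.restrict (Iic t)) :=
    aemeasurable_restrict_of_measurable_subtype measurableSet_Iic
      ((hk.comp hsection).pow_const p)
  have hκ : ∀ s u, s ≤ u → u ≤ t → k u s ^ p ≤ k t s ^ p := fun s u hsu hut =>
    ENNReal.rpow_le_rpow (hmono s u t hsu hut) (by linarith)
  set C := ∫⁻ s in {s : S | s ≤ t}, k t s ^ p ∂μ
  have hterm : ∀ n : ℕ, ((n + 1)! : ℝ≥0∞)⁻¹ ^ (1 / p) * C ^ (((n : ℝ) + 1) / p)
      = (((n + 1)! : ℝ≥0∞)⁻¹ * C ^ (n + 1)) ^ (1 / p) := fun n => by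
    rw [ENNReal.mul_rpow_of_nonneg _ _ hq.le, ← ENNReal.rpow_natCast, ← ENNReal.rpow_mul]
    push_cast
    ring_nf
  rw [tsum_congr hterm]
  refine ⟨ENNReal.tsum_le_tsum fun n =>
    ENNReal.rpow_le_rpow (setLIntegral_Iic_res_le μ hg hκ n) hq.le, fun hC => ?_⟩
  exact (ENNReal.tsum_comp_le_tsum_of_injective (add_left_injective 1) _).trans_lt
    (tsum_inv_factorial_mul_pow_rpow_lt_top hq hC.ne)

/-- **Series function bound for regular kernels on intervals** (Example 4, estimate (14)):
in the setting of a non-degenerate real interval with an atomless σ-finite Borel measure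
and a monotone kernel `k` with `∫_{[s,t]} k(t,u)^p μ(du) < ∞`, the series function
satisfies `I_{k,μ,p}(t) ≤ ∑_{n=1}^∞ (1/n!)^{1/p} (∫_{I(t)} k(t,s)^p μ(ds))^{n/p}`, and
the right-hand side is finite whenever `∫_{I(t)} k(t,s)^p μ(ds) < ∞`
(the summation index is shifted by one: `res … n = R_{·,n+1}` and the `n`-th summand
of the bound corresponds to the paper's summand `n + 1`). -/
theorem regular_kernel_series_function_bound
    (S : Set ℝ) (hconn : S.OrdConnected) (hnd : ∃ a ∈ S, ∃ b ∈ S, a ≠ b)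
    (μ : Measure S) [SigmaFinite μ] (hatom : ∀ x : S, μ {x} = 0)
    (p : ℝ) (hp : 1 ≤ p)
    (k : S → S → ℝ≥0∞)
    (hk : Measurable fun q : {q : S × S // q.2 ≤ q.1} => k q.1.1 q.1.2)
    (hmono : ∀ s s' t : S, s ≤ s' → s' ≤ t → k s' s ≤ k t s)
    (hfin : ∀ s t : S, s ≤ t → (∫⁻ u in {u : S | s ≤ u ∧ u ≤ t}, k t u ^ p ∂μ) < ∞) :
    ∀ t : S,
      (∑' n : ℕ,
        (∫⁻ s in {s : S | s ≤ t},
          res (· ≤ ·) μ (fun a b => k a b ^ p) n t s ∂μ) ^ (1 / p))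
        ≤ ∑' n : ℕ,
            ((Nat.factorial (n + 1) : ℝ≥0∞))⁻¹ ^ (1 / p)
              * (∫⁻ s in {s : S | s ≤ t}, k t s ^ p ∂μ) ^ (((n : ℝ) + 1) / p) ∧
      ((∫⁻ s in {s : S | s ≤ t}, k t s ^ p ∂μ) < ∞ →
        (∑' n : ℕ,
          ((Nat.factorial (n + 1) : ℝ≥0∞))⁻¹ ^ (1 / p)
            * (∫⁻ s in {s : S | s ≤ t}, k t s ^ p ∂μ) ^ (((n : ℝ) + 1) / p)) < ∞) :=
  regular_kernel_series_function_bound_general S μ hatom p hp k hk hmono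
end

section
/- For every n ∈ ℕ and j ∈ {1,…,N}^n, the function f_{n,j} takes all its values in (0,∞), is decreasing in its second variable, is continuous, and satisfies f_{n,j}(x,y) ≤ c_{n,j} · x^{β_{j_1} − 1 + Σ_{i=1}^n (α_{j_i} − β_{j_i})} · y^{−β_{j_1}} for all x, y > 0, where c_{n,j} := Π_{i=1}^{n−1} B(α_{j_1} − β_{j_2} + ⋯ + α_{j_i} − β_{j_{i+1}}, α_{j_{i+1}}) with B the Beta function. Equality holds in this estimate if β_{j_1} = ⋯ = β_{j_n} = 0. -/
/-
Induction on `n`. Bounding `(λx + y)^(-β)` by `(λx)^(-β)` and inserting the estimate for `f_n`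
(with exponent `e`), the integrand defining `f_{n+1}` is majorised by
`c_n x^(e-β) y^(-β_{j₁}) λ^(e-β) (1-λ)^(α-1)`, whose integral is a Beta integral because
`e - β + 1 = α_{j₁} - β_{j₂} + ⋯ + α_{j_n} - β_{j_{n+1}} > 0`; when all `β` vanish both steps are
equalities. The prefactor of this majorant depends continuously on `(x, y)`, so it dominates the
integrand locally uniformly and continuity passes through the integral by dominated convergence.
-/

open MeasureTheory ENNReal Real

/-- The recursively defined family of functions `f_{n,j}` of Proposition 2 of the paper.
A multi-index of length `n + 1` is represented by a function `j : ℕ → Fin N`, only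
whose values `j 0, …, j n` matter; `ffam N α β n j` corresponds to the paper's
`f_{n+1,(j₁,…,j_{n+1})}`. -/
noncomputable def ffam (N : ℕ) (α β : Fin N → ℝ) : ℕ → (ℕ → Fin N) → ℝ → ℝ → ℝ≥0∞
  | 0, j, x, y => ENNReal.ofReal (x ^ (α (j 0) - 1) * y ^ (-β (j 0)))
  | n + 1, j, x, y =>
      ENNReal.ofReal (x ^ α (j (n + 1))) *
        ∫⁻ l in Set.Ioo (0 : ℝ) 1,
          ENNReal.ofReal ((1 - l) ^ (α (j (n + 1)) - 1) * (l * x + y) ^ (-β (j (n + 1))))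
            * ffam N α β n j (l * x) y

/-- The Euler Beta function `B(a,b) = Γ(a) Γ(b) / Γ(a + b)`. -/
noncomputable def Beta (a b : ℝ) : ℝ := Real.Gamma a * Real.Gamma b / Real.Gamma (a + b)

/-- The constant `c_{n,j} = ∏_{i=1}^{n-1} B(α_{j₁} - β_{j₂} + ⋯ + α_{j_i} - β_{j_{i+1}}, α_{j_{i+1}})`;
here `cval N α β n j` corresponds to the paper's `c_{n+1,j}`. -/
noncomputable def cval (N : ℕ) (α β : Fin N → ℝ) (n : ℕ) (j : ℕ → Fin N) : ℝ :=
  ∏ i ∈ Finset.range n,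
    Beta (∑ h ∈ Finset.range (i + 1), (α (j h) - β (j (h + 1)))) (α (j (i + 1)))

open Set Filter Topology

lemma lintegral_rpow_mul_one_sub_rpow {K a b : ℝ} (hK : 0 ≤ K) (ha : -1 < a) (hb : 0 < b) :
    ∫⁻ l in Ioo (0 : ℝ) 1, ENNReal.ofReal (K * (l ^ a * (1 - l) ^ (b - 1)))
      = ENNReal.ofReal (K * Beta (a + 1) b) := by
  have hB : 0 < Beta (a + 1) b := ProbabilityTheory.beta_pos (by linarith) hb
  have hone := ProbabilityTheory.lintegral_betaPDF_eq_one (by linarith : 0 < a + 1) hb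
  rw [ProbabilityTheory.lintegral_betaPDF, add_sub_cancel_right] at hone
  calc ∫⁻ l in Ioo (0 : ℝ) 1, ENNReal.ofReal (K * (l ^ a * (1 - l) ^ (b - 1)))
      = ∫⁻ l in Ioo (0 : ℝ) 1, ENNReal.ofReal (K * Beta (a + 1) b)
          * ENNReal.ofReal (1 / Beta (a + 1) b * l ^ a * (1 - l) ^ (b - 1)) := by
        refine lintegral_congr fun l => ?_
        rw [← ENNReal.ofReal_mul (by positivity)]
        field_simp
    _ = ENNReal.ofReal (K * Beta (a + 1) b) := by
        rw [lintegral_const_mul' _ _ ENNReal.ofReal_ne_top]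
        exact (congrArg _ hone).trans (mul_one _)

def ffamExponent (N : ℕ) (α β : Fin N → ℝ) (n : ℕ) (j : ℕ → Fin N) : ℝ :=
  β (j 0) - 1 + ∑ i ∈ Finset.range (n + 1), (α (j i) - β (j i))

noncomputable def ffamBound (N : ℕ) (α β : Fin N → ℝ) (n : ℕ) (j : ℕ → Fin N) (x y : ℝ) : ℝ :=
  cval N α β n j * x ^ ffamExponent N α β n j * y ^ (-β (j 0))

noncomputable def ffamIntegrand (N : ℕ) (α β : Fin N → ℝ) (n : ℕ) (j : ℕ → Fin N)
    (l x y : ℝ) : ℝ≥0∞ :=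
  ENNReal.ofReal ((1 - l) ^ (α (j (n + 1)) - 1) * (l * x + y) ^ (-β (j (n + 1))))
    * ffam N α β n j (l * x) y

section

variable {N : ℕ} {α β : Fin N → ℝ} {j : ℕ → Fin N} {n : ℕ}

lemma ffam_zero (x y : ℝ) : ffam N α β 0 j x y = ENNReal.ofReal (ffamBound N α β 0 j x y) := by
  simp [ffam, ffamBound, ffamExponent, cval]

lemma ffam_succ (x y : ℝ) :
    ffam N α β (n + 1) j x y
      = ENNReal.ofReal (x ^ α (j (n + 1))) * ∫⁻ l in Ioo 0 1, ffamIntegrand N α β n j l x y :=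
  rfl

lemma ffam_measurable : Measurable (fun q : ℝ × ℝ => ffam N α β n j q.1 q.2) := by
  induction n with
  | zero => simp only [ffam]; fun_prop
  | succ n ih =>
    simp only [ffam_succ]
    have hint : Measurable fun p : (ℝ × ℝ) × ℝ => ffamIntegrand N α β n j p.2 p.1.1 p.1.2 :=
      Measurable.mul (by fun_prop)
        (ih.comp (f := fun p : (ℝ × ℝ) × ℝ => (p.2 * p.1.1, p.1.2)) (by fun_prop))
    exact (measurable_fst.pow_const _).ennreal_ofReal.mul hint.lintegral_prod_right'

lemma measurable_ffamIntegrand (x y : ℝ) : Measurable fun l => ffamIntegrand N α β n j l x y :=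
  Measurable.mul (by fun_prop)
    (ffam_measurable.comp (f := fun l : ℝ => (l * x, y)) (by fun_prop))

lemma ffamExponent_succ :
    ffamExponent N α β (n + 1) j
      = ffamExponent N α β n j - β (j (n + 1)) + α (j (n + 1)) := by
  simp only [ffamExponent, Finset.sum_range_succ]; ring

lemma ffamExponent_sub_add_one :
    ffamExponent N α β n j - β (j (n + 1)) + 1
      = ∑ h ∈ Finset.range (n + 1), (α (j h) - β (j (h + 1))) := by
  induction n with
  | zero => simp [ffamExponent]; ring
  | succ n ih =>
    rw [Finset.sum_range_succ, ← ih, ffamExponent_succ]; ring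

lemma cval_succ :
    cval N α β (n + 1) j
      = cval N α β n j * Beta (ffamExponent N α β n j - β (j (n + 1)) + 1) (α (j (n + 1))) := by
  rw [ffamExponent_sub_add_one]; exact Finset.prod_range_succ _ _

variable (hα : ∀ i, 0 < α i) (hβ0 : ∀ i, 0 ≤ β i) (hβα : ∀ i i', β i < α i')

include hβα in
lemma ffamExponent_sub_add_one_pos : 0 < ffamExponent N α β n j - β (j (n + 1)) + 1 := by
  rw [ffamExponent_sub_add_one]
  exact Finset.sum_pos (fun h _ => sub_pos.2 (hβα _ _)) Finset.nonempty_range_add_one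

include hα hβα in
lemma cval_pos : 0 < cval N α β n j := by
  induction n with
  | zero => simp [cval]
  | succ n ih =>
    rw [cval_succ]
    exact mul_pos ih (ProbabilityTheory.beta_pos (ffamExponent_sub_add_one_pos hβα) (hα _))

lemma rpow_neg_mul_ffamBound_mul_left {l x : ℝ} (hl : 0 < l) (hx : 0 < x) (b y : ℝ) :
    (l * x) ^ (-b) * ffamBound N α β n j (l * x) y
      = cval N α β n j * x ^ (ffamExponent N α β n j - b) * y ^ (-β (j 0))
        * l ^ (ffamExponent N α β n j - b) := by
  calc (l * x) ^ (-b) * ffamBound N α β n j (l * x) y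
      = cval N α β n j * ((l * x) ^ (-b) * (l * x) ^ ffamExponent N α β n j)
          * y ^ (-β (j 0)) := by
        rw [ffamBound]; ring
    _ = _ := by
        rw [← Real.rpow_add (mul_pos hl hx), neg_add_eq_sub, Real.mul_rpow hl.le hx.le]; ring

include hα hβα in
lemma ofReal_rpow_mul_lintegral_ffamBound {x y : ℝ} (hx : 0 < x) (hy : 0 ≤ y) :
    ENNReal.ofReal (x ^ α (j (n + 1))) * ∫⁻ l in Ioo 0 1,
        ENNReal.ofReal ((1 - l) ^ (α (j (n + 1)) - 1) * (l * x) ^ (-β (j (n + 1)))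
          * ffamBound N α β n j (l * x) y)
      = ENNReal.ofReal (ffamBound N α β (n + 1) j x y) := by
  have hc := cval_pos hα hβα (n := n) (j := j)
  have hpt : ∀ l ∈ Ioo (0 : ℝ) 1,
      ENNReal.ofReal ((1 - l) ^ (α (j (n + 1)) - 1) * (l * x) ^ (-β (j (n + 1)))
          * ffamBound N α β n j (l * x) y)
        = ENNReal.ofReal ((cval N α β n j * x ^ (ffamExponent N α β n j - β (j (n + 1)))
            * y ^ (-β (j 0))) * (l ^ (ffamExponent N α β n j - β (j (n + 1)))
              * (1 - l) ^ (α (j (n + 1)) - 1))) := fun l hl => by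
    rw [mul_assoc, rpow_neg_mul_ffamBound_mul_left hl.1 hx]; ring_nf
  rw [setLIntegral_congr_fun measurableSet_Ioo hpt,
    lintegral_rpow_mul_one_sub_rpow (by positivity)
      (by linarith [ffamExponent_sub_add_one_pos hβα (n := n) (j := j)]) (hα _),
    ← ENNReal.ofReal_mul (by positivity), ffamBound, cval_succ, ffamExponent_succ,
    Real.rpow_add hx]
  ring_nf

include hβ0 in
lemma ffamIntegrand_le
    (hf : ∀ {x y : ℝ}, 0 < x → 0 < y →
      ffam N α β n j x y ≤ ENNReal.ofReal (ffamBound N α β n j x y))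
    {l x y : ℝ} (hl : l ∈ Ioo (0 : ℝ) 1) (hx : 0 < x) (hy : 0 < y) :
    ffamIntegrand N α β n j l x y
      ≤ ENNReal.ofReal ((1 - l) ^ (α (j (n + 1)) - 1) * (l * x) ^ (-β (j (n + 1)))
          * ffamBound N α β n j (l * x) y) := by
  have hlx : 0 < l * x := mul_pos hl.1 hx
  have h1l : 0 ≤ (1 - l) ^ (α (j (n + 1)) - 1) := Real.rpow_nonneg (sub_nonneg.2 hl.2.le) _
  rw [ENNReal.ofReal_mul (by positivity)]
  refine mul_le_mul' (ENNReal.ofReal_le_ofReal ?_) (hf hlx hy)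
  exact mul_le_mul_of_nonneg_left
    (Real.rpow_le_rpow_of_nonpos hlx (by linarith) (neg_nonpos.2 (hβ0 _))) h1l

include hα hβ0 hβα in
theorem ffam_le_ffamBound {x y : ℝ} (hx : 0 < x) (hy : 0 < y) :
    ffam N α β n j x y ≤ ENNReal.ofReal (ffamBound N α β n j x y) := by
  induction n generalizing x y with
  | zero => rw [ffam_zero]
  | succ n ih =>
    rw [ffam_succ, ← ofReal_rpow_mul_lintegral_ffamBound hα hβα hx hy.le]
    exact mul_le_mul_right
      (setLIntegral_mono' measurableSet_Ioo fun l hl => ffamIntegrand_le hβ0 ih hl hx hy) _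

include hα hβ0 hβα in
theorem ffam_lt_top {x y : ℝ} (hx : 0 < x) (hy : 0 < y) : ffam N α β n j x y < ⊤ :=
  (ffam_le_ffamBound hα hβ0 hβα hx hy).trans_lt ENNReal.ofReal_lt_top

include hα hβα in
theorem ffam_eq_ffamBound (hβ : ∀ i ≤ n, β (j i) = 0) {x y : ℝ} (hx : 0 < x) (hy : 0 < y) :
    ffam N α β n j x y = ENNReal.ofReal (ffamBound N α β n j x y) := by
  induction n generalizing x y with
  | zero => exact ffam_zero x y
  | succ n ih =>
    rw [ffam_succ, ← ofReal_rpow_mul_lintegral_ffamBound hα hβα hx hy.le]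
    refine congrArg _ (setLIntegral_congr_fun measurableSet_Ioo fun l hl => ?_)
    rw [ffamIntegrand, ih (fun i hi => hβ i (hi.trans n.le_succ)) (mul_pos hl.1 hx) hy,
      hβ _ le_rfl, neg_zero, Real.rpow_zero, Real.rpow_zero,
      ← ENNReal.ofReal_mul (mul_nonneg (Real.rpow_nonneg (sub_nonneg.2 hl.2.le) _) zero_le_one)]

theorem ffam_pos {x y : ℝ} (hx : 0 < x) (hy : 0 < y) : 0 < ffam N α β n j x y := by
  induction n generalizing x with
  | zero => simp only [ffam]; exact ENNReal.ofReal_pos.2 (by positivity)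
  | succ n ih =>
    have hpos : ∀ l ∈ Ioo (0 : ℝ) 1, 0 < ffamIntegrand N α β n j l x y := fun l hl =>
      ENNReal.mul_pos (ENNReal.ofReal_pos.2 (mul_pos (Real.rpow_pos_of_pos (sub_pos.2 hl.2) _)
        (by have := hl.1; positivity))).ne' (ih (mul_pos hl.1 hx)).ne'
    have hint : 0 < ∫⁻ l in Ioo 0 1, ffamIntegrand N α β n j l x y := by
      rw [setLIntegral_pos_iff (measurable_ffamIntegrand x y)]
      calc (0 : ℝ≥0∞) < volume (Ioo (0 : ℝ) 1) := by simp
        _ ≤ volume (Function.support (fun l => ffamIntegrand N α β n j l x y) ∩ Ioo 0 1) :=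
          measure_mono fun l hl => ⟨(hpos l hl).ne', hl⟩
    rw [ffam_succ]
    exact ENNReal.mul_pos (ENNReal.ofReal_pos.2 (by positivity)).ne' hint.ne'

include hβ0 in
theorem ffam_le_ffam_of_le_right {x y y' : ℝ} (hx : 0 < x) (hy : 0 < y) (hyy' : y ≤ y') :
    ffam N α β n j x y' ≤ ffam N α β n j x y := by
  induction n generalizing x with
  | zero =>
    refine ENNReal.ofReal_le_ofReal (mul_le_mul_of_nonneg_left ?_ (by positivity))
    exact Real.rpow_le_rpow_of_nonpos hy hyy' (neg_nonpos.2 (hβ0 _))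
  | succ n ih =>
    refine mul_le_mul_right (setLIntegral_mono' measurableSet_Ioo fun l hl =>
      mul_le_mul' (ENNReal.ofReal_le_ofReal ?_) (ih (mul_pos hl.1 hx))) _
    have hlx : 0 < l * x := mul_pos hl.1 hx
    exact mul_le_mul_of_nonneg_left
      (Real.rpow_le_rpow_of_nonpos (by positivity) (by linarith) (neg_nonpos.2 (hβ0 _)))
      (Real.rpow_nonneg (sub_nonneg.2 hl.2.le) _)

include hα hβ0 hβα in
theorem continuousAt_lintegral_ffamIntegrand
    (hf : ContinuousOn (fun q : ℝ × ℝ => ffam N α β n j q.1 q.2) (Ioi 0 ×ˢ Ioi 0))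
    {p : ℝ × ℝ} (hp : p ∈ Ioi (0 : ℝ) ×ˢ Ioi (0 : ℝ)) :
    ContinuousAt (fun q : ℝ × ℝ => ∫⁻ l in Ioo 0 1, ffamIntegrand N α β n j l q.1 q.2) p := by
  have hp1 : 0 < p.1 := hp.1
  have hp2 : 0 < p.2 := hp.2
  have hc := cval_pos hα hβα (n := n) (j := j)
  set e := ffamExponent N α β n j - β (j (n + 1))
  set a := α (j (n + 1))
  let P : ℝ × ℝ → ℝ := fun q => cval N α β n j * q.1 ^ e * q.2 ^ (-β (j 0))
  have hP : ContinuousAt P p :=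
    (continuousAt_const.mul (continuousAt_fst.rpow_const (Or.inl hp1.ne'))).mul
      (continuousAt_snd.rpow_const (Or.inl hp2.ne'))
  have hPp : 0 ≤ P p := by positivity
  have hnear : ∀ᶠ q in 𝓝 p, q ∈ Ioi (0 : ℝ) ×ˢ Ioi (0 : ℝ) ∧ P q < P p + 1 :=
    Filter.Eventually.and ((isOpen_Ioi.prod isOpen_Ioi).mem_nhds hp)
      (hP.eventually (gt_mem_nhds (lt_add_one _)))
  refine tendsto_lintegral_filter_of_dominated_convergence
    (fun l => ENNReal.ofReal ((P p + 1) * (l ^ e * (1 - l) ^ (a - 1))))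
    (Eventually.of_forall fun q => measurable_ffamIntegrand q.1 q.2) ?_ ?_ ?_
  · filter_upwards [hnear] with q ⟨⟨hq1, hq2⟩, hPq⟩
    refine ae_restrict_of_forall_mem measurableSet_Ioo fun l hl =>
      (ffamIntegrand_le hβ0 (ffam_le_ffamBound hα hβ0 hβα) hl hq1 hq2).trans
        (ENNReal.ofReal_le_ofReal ?_)
    have hker : 0 ≤ l ^ e * (1 - l) ^ (a - 1) :=
      mul_nonneg (Real.rpow_nonneg hl.1.le _) (Real.rpow_nonneg (sub_nonneg.2 hl.2.le) _)
    calc (1 - l) ^ (a - 1) * (l * q.1) ^ (-β (j (n + 1))) * ffamBound N α β n j (l * q.1) q.2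
        = P q * (l ^ e * (1 - l) ^ (a - 1)) := by
          rw [mul_assoc, rpow_neg_mul_ffamBound_mul_left hl.1 hq1]; ring
      _ ≤ (P p + 1) * (l ^ e * (1 - l) ^ (a - 1)) := mul_le_mul_of_nonneg_right hPq.le hker
  · rw [lintegral_rpow_mul_one_sub_rpow (by linarith)
      (by linarith [ffamExponent_sub_add_one_pos hβα (n := n) (j := j)]) (hα _)]
    exact ENNReal.ofReal_ne_top
  · refine ae_restrict_of_forall_mem measurableSet_Ioo fun l hl => ?_
    have hlp : 0 < l * p.1 := mul_pos hl.1 hp1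
    have hweight : ContinuousAt
        (fun q : ℝ × ℝ => (1 - l) ^ (a - 1) * (l * q.1 + q.2) ^ (-β (j (n + 1)))) p :=
      continuousAt_const.mul (((continuousAt_const.mul continuousAt_fst).add
        continuousAt_snd).rpow_const (Or.inl (add_pos hlp hp2).ne'))
    have hffam : ContinuousAt (fun q : ℝ × ℝ => ffam N α β n j (l * q.1) q.2) p :=
      (hf.continuousAt (prod_mem_nhds (Ioi_mem_nhds hlp) (Ioi_mem_nhds hp2))).comp
        (f := fun q : ℝ × ℝ => (l * q.1, q.2)) (by fun_prop)
    exact ENNReal.Tendsto.mul (ENNReal.continuous_ofReal.continuousAt.comp hweight)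
      (Or.inr (ffam_lt_top hα hβ0 hβα hlp hp2).ne) hffam (Or.inr ENNReal.ofReal_ne_top)

include hα hβ0 hβα in
theorem ffam_continuousOn :
    ContinuousOn (fun q : ℝ × ℝ => ffam N α β n j q.1 q.2) (Ioi 0 ×ˢ Ioi 0) := by
  induction n with
  | zero =>
    exact ENNReal.continuous_ofReal.comp_continuousOn
      ((continuousOn_fst.rpow_const fun q hq => Or.inl (ne_of_gt hq.1)).mul
        (continuousOn_snd.rpow_const fun q hq => Or.inl (ne_of_gt hq.2)))
  | succ n ih =>
    intro p hp
    simp only [ffam_succ]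
    refine ContinuousAt.continuousWithinAt (ENNReal.Tendsto.mul ?_ (Or.inl ?_)
      (continuousAt_lintegral_ffamIntegrand hα hβ0 hβα ih hp) (Or.inr ENNReal.ofReal_ne_top))
    · exact ENNReal.continuous_ofReal.continuousAt.comp
        (continuousAt_fst.rpow_const (Or.inl (ne_of_gt hp.1)))
    · exact (ENNReal.ofReal_pos.2 (Real.rpow_pos_of_pos hp.1 _)).ne'

end

theorem family_of_functions_estimate_general (N : ℕ) (α β : Fin N → ℝ)
    (hα : ∀ i, 0 < α i) (hβ0 : ∀ i, 0 ≤ β i) (hβα : ∀ i i', β i < α i') :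
    ∀ (n : ℕ) (j : ℕ → Fin N),
      (∀ x y : ℝ, 0 < x → 0 < y → 0 < ffam N α β n j x y ∧ ffam N α β n j x y < ⊤) ∧
      (∀ x : ℝ, 0 < x → ∀ y y' : ℝ, 0 < y → y ≤ y' →
        ffam N α β n j x y' ≤ ffam N α β n j x y) ∧
      ContinuousOn (fun q : ℝ × ℝ => ffam N α β n j q.1 q.2)
        (Set.Ioi (0 : ℝ) ×ˢ Set.Ioi (0 : ℝ)) ∧
      (∀ x y : ℝ, 0 < x → 0 < y →
        ffam N α β n j x y
          ≤ ENNReal.ofReal (cval N α β n j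
              * x ^ (β (j 0) - 1 + ∑ i ∈ Finset.range (n + 1), (α (j i) - β (j i)))
              * y ^ (-β (j 0)))) ∧
      ((∀ i ≤ n, β (j i) = 0) → ∀ x y : ℝ, 0 < x → 0 < y →
        ffam N α β n j x y
          = ENNReal.ofReal (cval N α β n j
              * x ^ (β (j 0) - 1 + ∑ i ∈ Finset.range (n + 1), (α (j i) - β (j i)))
              * y ^ (-β (j 0)))) := fun _ _ =>
  ⟨fun _ _ hx hy => ⟨ffam_pos hx hy, ffam_lt_top hα hβ0 hβα hx hy⟩,
    fun _ hx _ _ hy hyy' => ffam_le_ffam_of_le_right hβ0 hx hy hyy',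
    ffam_continuousOn hα hβ0 hβα,
    fun _ _ hx hy => ffam_le_ffamBound hα hβ0 hβα hx hy,
    fun hβ _ _ hx hy => ffam_eq_ffamBound hα hβα hβ hx hy⟩

/-- **Proposition 2 (i) of the paper**: each `f_{n,j}` is `(0,∞)`-valued on
`(0,∞) × (0,∞)`, decreasing in the second variable, continuous, and satisfies
`f_{n,j}(x,y) ≤ c_{n,j} x^{β_{j₁} - 1 + ∑_{i=1}^n (α_{j_i} - β_{j_i})} y^{-β_{j₁}}`,
with equality if `β_{j₁} = ⋯ = β_{j_n} = 0` (the index is shifted by one: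
`ffam N α β n j` is the paper's `f_{n+1,j}`). -/
theorem family_of_functions_estimate (N : ℕ) (hN : 0 < N) (α β : Fin N → ℝ)
    (hα : ∀ i, 0 < α i) (hβ0 : ∀ i, 0 ≤ β i) (hβα : ∀ i i', β i < α i') :
    ∀ (n : ℕ) (j : ℕ → Fin N),
      (∀ x y : ℝ, 0 < x → 0 < y → 0 < ffam N α β n j x y ∧ ffam N α β n j x y < ⊤) ∧
      (∀ x : ℝ, 0 < x → ∀ y y' : ℝ, 0 < y → y ≤ y' →
        ffam N α β n j x y' ≤ ffam N α β n j x y) ∧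
      ContinuousOn (fun q : ℝ × ℝ => ffam N α β n j q.1 q.2)
        (Set.Ioi (0 : ℝ) ×ˢ Set.Ioi (0 : ℝ)) ∧
      (∀ x y : ℝ, 0 < x → 0 < y →
        ffam N α β n j x y
          ≤ ENNReal.ofReal (cval N α β n j
              * x ^ (β (j 0) - 1 + ∑ i ∈ Finset.range (n + 1), (α (j i) - β (j i)))
              * y ^ (-β (j 0)))) ∧
      ((∀ i ≤ n, β (j i) = 0) → ∀ x y : ℝ, 0 < x → 0 < y →
        ffam N α β n j x y
          = ENNReal.ofReal (cval N α β n j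
              * x ^ (β (j 0) - 1 + ∑ i ∈ Finset.range (n + 1), (α (j i) - β (j i)))
              * y ^ (-β (j 0)))) :=
  family_of_functions_estimate_general N α β hα hβ0 hβα
end

section
/- For each n ∈ ℕ, the positive real number ĉ_n := Π_{i=1}^{n−1} Γ((α_0 − β_∞)i) / Γ((α_0 − β_∞)i + β_∞) satisfies c_{n,j} ≤ ĉ_n Γ(α_0)^n / Γ((α_0 − β_∞)n + β_∞) for every j ∈ {1,…,N}^n, with equality if N = 1. Moreover, max_{n∈ℕ} ĉ_n = ĉ, where x_Γ denotes the global minimum point of the Gamma function on (0,∞), n_Γ := min{i ∈ ℕ : (α_0 − β_∞)i ≥ x_Γ}, and ĉ := max_{i=1,…,n_Γ} ĉ_i. -/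
open Real

/-- The constant `ĉ_n = ∏_{i=1}^{n-1} Γ((α₀ - β_∞) i) / Γ((α₀ - β_∞) i + β_∞)`. -/
noncomputable def chatn (α₀ βmax : ℝ) (n : ℕ) : ℝ :=
  ∏ i ∈ Finset.Icc 1 (n - 1), Real.Gamma ((α₀ - βmax) * i) / Real.Gamma ((α₀ - βmax) * i + βmax)

lemma my_Beta_pos {a b : ℝ} (ha : 0 < a) (hb : 0 < b) : 0 < Beta a b :=
  div_pos (mul_pos (Real.Gamma_pos_of_pos ha) (Real.Gamma_pos_of_pos hb))
    (Real.Gamma_pos_of_pos (by linarith))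

lemma my_Beta_symm (a b : ℝ) : Beta a b = Beta b a := by
  rw [Beta, Beta, mul_comm, add_comm]

lemma my_gamma_ratio {x x' b : ℝ} (hx : 0 < x) (hxx : x ≤ x') (hb : 0 ≤ b) :
    Real.Gamma (x + b) * Real.Gamma x' ≤ Real.Gamma (x' + b) * Real.Gamma x := by
  rcases eq_or_lt_of_le hb with rfl | hb
  · simp [mul_comm]
  rcases eq_or_lt_of_le hxx with rfl | hxx
  · simp [mul_comm]
  have hx' : 0 < x' := lt_trans hx hxx
  have hxb : 0 < x' + b := by linarith
  have hd : 0 < x' - x + b := by linarith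
  set t : ℝ := b / (x' - x + b) with ht
  have ht0 : 0 ≤ t := by positivity
  have ht1 : t ≤ 1 := by rw [div_le_one hd]; linarith
  have hcf := Real.convexOn_log_Gamma
  have h1 := hcf.2 (Set.mem_Ioi.mpr hx) (Set.mem_Ioi.mpr hxb)
    (by linarith : (0:ℝ) ≤ 1 - t) ht0 (by ring)
  have h2 := hcf.2 (Set.mem_Ioi.mpr hx) (Set.mem_Ioi.mpr hxb)
    ht0 (by linarith : (0:ℝ) ≤ 1 - t) (by ring)
  have tfact : t * (x' - x + b) = b := div_mul_cancel₀ _ hd.ne'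
  have hc1 : (1 - t) • x + t • (x' + b) = x + b := by
    simp only [smul_eq_mul]; linear_combination tfact
  have hc2 : t • x + (1 - t) • (x' + b) = x' := by
    simp only [smul_eq_mul]; linear_combination -tfact
  rw [hc1] at h1
  rw [hc2] at h2
  simp only [Function.comp_apply, smul_eq_mul] at h1 h2
  have key : Real.log (Real.Gamma (x + b)) + Real.log (Real.Gamma x')
      ≤ Real.log (Real.Gamma (x' + b)) + Real.log (Real.Gamma x) := by linarith
  have e1 : 0 < Real.Gamma (x + b) := Real.Gamma_pos_of_pos (by linarith)
  have e2 : 0 < Real.Gamma x' := Real.Gamma_pos_of_pos hx'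
  have e3 : 0 < Real.Gamma (x' + b) := Real.Gamma_pos_of_pos hxb
  have e4 : 0 < Real.Gamma x := Real.Gamma_pos_of_pos hx
  have := Real.exp_le_exp.mpr key
  rwa [Real.exp_add, Real.exp_add, Real.exp_log e1, Real.exp_log e2, Real.exp_log e3,
    Real.exp_log e4] at this

lemma my_Beta_le_left {a a' b : ℝ} (ha : 0 < a) (haa : a ≤ a') (hb : 0 < b) :
    Beta a' b ≤ Beta a b := by
  have ha' : 0 < a' := lt_of_lt_of_le ha haa
  have key := my_gamma_ratio ha haa hb.le
  unfold Beta
  rw [div_le_div_iff₀ (Real.Gamma_pos_of_pos (by linarith)) (Real.Gamma_pos_of_pos (by linarith))]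
  calc Real.Gamma a' * Real.Gamma b * Real.Gamma (a + b)
      = (Real.Gamma (a + b) * Real.Gamma a') * Real.Gamma b := by ring
    _ ≤ (Real.Gamma (a' + b) * Real.Gamma a) * Real.Gamma b :=
        mul_le_mul_of_nonneg_right key (Real.Gamma_pos_of_pos hb).le
    _ = Real.Gamma a * Real.Gamma b * Real.Gamma (a' + b) := by ring

lemma my_Beta_le {a a' b b' : ℝ} (ha : 0 < a) (haa : a ≤ a') (hb : 0 < b) (hbb : b ≤ b') :
    Beta a' b' ≤ Beta a b := by
  have hb' : 0 < b' := lt_of_lt_of_le hb hbb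
  calc Beta a' b' ≤ Beta a b' := my_Beta_le_left ha haa hb'
    _ = Beta b' a := my_Beta_symm _ _
    _ ≤ Beta b a := my_Beta_le_left hb hbb ha
    _ = Beta a b := my_Beta_symm _ _

lemma my_gamma_mono {xΓ a b : ℝ} (hxΓpos : 0 < xΓ)
    (hxΓ : ∀ x : ℝ, 0 < x → Real.Gamma xΓ ≤ Real.Gamma x)
    (ha : xΓ ≤ a) (hb : 0 ≤ b) : Real.Gamma a ≤ Real.Gamma (a + b) := by
  rcases eq_or_lt_of_le hb with rfl | hb
  · simp
  have hapos : 0 < a := lt_of_lt_of_le hxΓpos ha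
  have habpos : 0 < a + b := by linarith
  have hd : 0 < a + b - xΓ := by linarith
  set t : ℝ := (a - xΓ) / (a + b - xΓ) with ht
  have ht0 : 0 ≤ t := div_nonneg (by linarith) hd.le
  have ht1 : t ≤ 1 := by rw [div_le_one hd]; linarith
  have tfact : t * (a + b - xΓ) = a - xΓ := div_mul_cancel₀ _ hd.ne'
  have hc : (1 - t) • xΓ + t • (a + b) = a := by
    simp only [smul_eq_mul]; linear_combination tfact
  have h1 := Real.convexOn_log_Gamma.2 (Set.mem_Ioi.mpr hxΓpos) (Set.mem_Ioi.mpr habpos)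
    (by linarith : (0:ℝ) ≤ 1 - t) ht0 (by ring)
  rw [hc] at h1
  simp only [Function.comp_apply, smul_eq_mul] at h1
  have e1 : 0 < Real.Gamma a := Real.Gamma_pos_of_pos hapos
  have e2 : 0 < Real.Gamma (a + b) := Real.Gamma_pos_of_pos habpos
  have e3 : 0 < Real.Gamma xΓ := Real.Gamma_pos_of_pos hxΓpos
  have hlog : Real.log (Real.Gamma xΓ) ≤ Real.log (Real.Gamma (a + b)) :=
    Real.log_le_log e3 (hxΓ _ habpos)
  have key : Real.log (Real.Gamma a) ≤ Real.log (Real.Gamma (a + b)) := by nlinarith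
  have := Real.exp_le_exp.mpr key
  rwa [Real.exp_log e1, Real.exp_log e2] at this

lemma my_prodBeta {α₀ βmax : ℝ} (hα₀ : 0 < α₀) (hβ : 0 ≤ βmax) (hβα : βmax < α₀) (n : ℕ) :
    ∏ i ∈ Finset.range n, Beta ((α₀ - βmax) * (i + 1)) α₀
      = chatn α₀ βmax (n + 1) * Real.Gamma α₀ ^ (n + 1)
          / Real.Gamma ((α₀ - βmax) * (n + 1) + βmax) := by
  induction n with
  | zero =>
      have h : (α₀ - βmax) * ((0:ℕ) + 1 : ℝ) + βmax = α₀ := by push_cast; ring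
      simp [chatn, h, (Real.Gamma_pos_of_pos hα₀).ne']
  | succ n ih =>
      rw [Finset.prod_range_succ, ih]
      have hch : chatn α₀ βmax (n + 1 + 1)
          = chatn α₀ βmax (n + 1)
            * (Real.Gamma ((α₀ - βmax) * (n + 1)) / Real.Gamma ((α₀ - βmax) * (n + 1) + βmax)) := by
        unfold chatn
        simp only [Nat.add_sub_cancel]
        rw [Finset.prod_Icc_succ_top (Nat.le_add_left 1 n)]
        push_cast
        ring
      have heq : (α₀ - βmax) * ((n:ℝ) + 1) + α₀ = (α₀ - βmax) * ((n:ℝ) + 1 + 1) + βmax := by ring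
      have g1 : Real.Gamma ((α₀ - βmax) * ((n:ℝ) + 1) + βmax) ≠ 0 :=
        (Real.Gamma_pos_of_pos (by nlinarith [sub_pos.mpr hβα])).ne'
      have g2 : Real.Gamma ((α₀ - βmax) * ((n:ℝ) + 1 + 1) + βmax) ≠ 0 :=
        (Real.Gamma_pos_of_pos (by nlinarith [sub_pos.mpr hβα])).ne'
      rw [hch, Beta]
      push_cast
      rw [heq]
      field_simp
      ring

lemma my_chatn_succ (α₀ βmax : ℝ) (m : ℕ) :
    chatn α₀ βmax (m + 2)
      = chatn α₀ βmax (m + 1)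
        * (Real.Gamma ((α₀ - βmax) * (m + 1)) / Real.Gamma ((α₀ - βmax) * (m + 1) + βmax)) := by
  unfold chatn
  rw [show m + 2 - 1 = m + 1 from rfl, show m + 1 - 1 = m from rfl]
  rw [Finset.prod_Icc_succ_top (Nat.le_add_left 1 m)]
  push_cast
  ring

/-- **Proposition 2 (ii) of the paper**: `ĉ_n > 0`,
`c_{n,j} ≤ ĉ_n Γ(α₀)ⁿ / Γ((α₀ - β_∞) n + β_∞)` with equality for `N = 1`, and
`max_{n ∈ ℕ} ĉ_n = ĉ := max_{i = 1,…,n_Γ} ĉ_i` where `x_Γ` is the global minimum point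
of `Γ` on `(0,∞)` and `n_Γ = min {i ∈ ℕ : (α₀ - β_∞) i ≥ x_Γ}` (multi-index lengths
are shifted by one: `cval N α β n j` is the paper's `c_{n+1,j}`). -/
theorem chat_estimates (N : ℕ) (hN : 0 < N) (α β : Fin N → ℝ)
    (hα : ∀ i, 0 < α i) (hβ0 : ∀ i, 0 ≤ β i) (hβα : ∀ i i', β i < α i')
    (α₀ βmax : ℝ) (hα₀le : ∀ i, α₀ ≤ α i) (hα₀mem : ∃ i, α i = α₀)
    (hβmaxle : ∀ i, β i ≤ βmax) (hβmaxmem : ∃ i, β i = βmax)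
    (xΓ : ℝ) (hxΓpos : 0 < xΓ) (hxΓ : ∀ x : ℝ, 0 < x → Real.Gamma xΓ ≤ Real.Gamma x)
    (nΓ : ℕ) (hnΓ1 : 1 ≤ nΓ) (hnΓge : xΓ ≤ (α₀ - βmax) * nΓ)
    (hnΓmin : ∀ i : ℕ, 1 ≤ i → xΓ ≤ (α₀ - βmax) * i → nΓ ≤ i) :
    (∀ n : ℕ, 1 ≤ n → 0 < chatn α₀ βmax n) ∧
    (∀ (n : ℕ) (j : ℕ → Fin N),
      cval N α β n j
        ≤ chatn α₀ βmax (n + 1) * Real.Gamma α₀ ^ (n + 1)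
            / Real.Gamma ((α₀ - βmax) * (n + 1) + βmax)) ∧
    (N = 1 → ∀ (n : ℕ) (j : ℕ → Fin N),
      cval N α β n j
        = chatn α₀ βmax (n + 1) * Real.Gamma α₀ ^ (n + 1)
            / Real.Gamma ((α₀ - βmax) * (n + 1) + βmax)) ∧
    (∀ n : ℕ, 1 ≤ n →
      chatn α₀ βmax n
        ≤ (Finset.Icc 1 nΓ).sup' (Finset.nonempty_Icc.mpr hnΓ1) (chatn α₀ βmax)) := by
  obtain ⟨ia, hia⟩ := hα₀mem
  obtain ⟨ib, hib⟩ := hβmaxmem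
  have hα₀pos : 0 < α₀ := hia ▸ hα ia
  have hβmax0 : 0 ≤ βmax := hib ▸ hβ0 ib
  have hba : βmax < α₀ := by rw [← hia, ← hib]; exact hβα ib ia
  have hc : 0 < α₀ - βmax := sub_pos.mpr hba
  have part1 : ∀ n : ℕ, 1 ≤ n → 0 < chatn α₀ βmax n := by
    intro n _
    unfold chatn
    refine Finset.prod_pos fun i hi => ?_
    have hi1 : (1:ℝ) ≤ i := by exact_mod_cast (Finset.mem_Icc.mp hi).1
    have hpos : 0 < (α₀ - βmax) * i := by nlinarith
    exact div_pos (Real.Gamma_pos_of_pos hpos) (Real.Gamma_pos_of_pos (by linarith))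
  have hsum_lb : ∀ (j : ℕ → Fin N) (i : ℕ),
      (α₀ - βmax) * (i + 1) ≤ ∑ h ∈ Finset.range (i + 1), (α (j h) - β (j (h + 1))) := by
    intro j i
    calc (α₀ - βmax) * ((i:ℝ) + 1)
        = ∑ _h ∈ Finset.range (i + 1), (α₀ - βmax) := by
          rw [Finset.sum_const, Finset.card_range, nsmul_eq_mul]; push_cast; ring
      _ ≤ _ := Finset.sum_le_sum fun h _ => sub_le_sub (hα₀le _) (hβmaxle _)
  have hcmul : ∀ i : ℕ, 0 < (α₀ - βmax) * ((i:ℝ) + 1) := by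
    intro i
    have : (0:ℝ) < (i:ℝ) + 1 := by positivity
    nlinarith
  have part2 : ∀ (n : ℕ) (j : ℕ → Fin N),
      cval N α β n j
        ≤ chatn α₀ βmax (n + 1) * Real.Gamma α₀ ^ (n + 1)
            / Real.Gamma ((α₀ - βmax) * (n + 1) + βmax) := by
    intro n j
    rw [← my_prodBeta hα₀pos hβmax0 hba n]
    unfold cval
    refine Finset.prod_le_prod (fun i _ => ?_) (fun i _ => ?_)
    · have hS : 0 < ∑ h ∈ Finset.range (i + 1), (α (j h) - β (j (h + 1))) :=
        Finset.sum_pos (fun h _ => sub_pos.mpr (hβα _ _)) Finset.nonempty_range_add_one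
      exact (my_Beta_pos hS (hα _)).le
    · exact my_Beta_le (hcmul i) (hsum_lb j i) hα₀pos (hα₀le _)
  refine ⟨part1, part2, ?_, ?_⟩
  · intro hN1
    subst hN1
    have hallα : ∀ i, α i = α₀ := fun i => by rw [Subsingleton.elim i ia, hia]
    have hallβ : ∀ i, β i = βmax := fun i => by rw [Subsingleton.elim i ib, hib]
    intro n j
    rw [← my_prodBeta hα₀pos hβmax0 hba n]
    unfold cval
    refine Finset.prod_congr rfl fun i _ => ?_
    rw [hallα (j (i + 1))]
    congr 1
    calc ∑ h ∈ Finset.range (i + 1), (α (j h) - β (j (h + 1)))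
        = ∑ _h ∈ Finset.range (i + 1), (α₀ - βmax) :=
          Finset.sum_congr rfl fun h _ => by rw [hallα, hallβ]
      _ = (α₀ - βmax) * ((i:ℝ) + 1) := by
          rw [Finset.sum_const, Finset.card_range, nsmul_eq_mul]; push_cast; ring
  · have hstep : ∀ n : ℕ, nΓ ≤ n → chatn α₀ βmax (n + 1) ≤ chatn α₀ βmax n := by
      intro n hn
      have hn1 : 1 ≤ n := hnΓ1.trans hn
      obtain ⟨m, rfl⟩ : ∃ m, n = m + 1 := ⟨n - 1, (Nat.succ_pred_eq_of_pos hn1).symm⟩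
      rw [my_chatn_succ]
      have hxn : xΓ ≤ (α₀ - βmax) * ((m:ℝ) + 1) := by
        refine le_trans hnΓge ?_
        have : (nΓ:ℝ) ≤ (m:ℝ) + 1 := by exact_mod_cast hn
        nlinarith
      have hratio : Real.Gamma ((α₀ - βmax) * ((m:ℝ) + 1))
          / Real.Gamma ((α₀ - βmax) * ((m:ℝ) + 1) + βmax) ≤ 1 := by
        rw [div_le_one (Real.Gamma_pos_of_pos (by nlinarith [hcmul m]))]
        exact my_gamma_mono hxΓpos hxΓ hxn hβmax0
      push_cast
      calc chatn α₀ βmax (m + 1)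
            * (Real.Gamma ((α₀ - βmax) * ((m:ℝ) + 1))
              / Real.Gamma ((α₀ - βmax) * ((m:ℝ) + 1) + βmax))
          ≤ chatn α₀ βmax (m + 1) * 1 :=
            mul_le_mul_of_nonneg_left hratio (part1 _ (Nat.le_add_left 1 m)).le
        _ = chatn α₀ βmax (m + 1) := mul_one _
    have hmono : ∀ n : ℕ, nΓ ≤ n → chatn α₀ βmax n ≤ chatn α₀ βmax nΓ := by
      intro n hn
      induction n, hn using Nat.le_induction with
      | base => exact le_refl _
      | succ n hn ih => exact (hstep n hn).trans ih
    intro n hn1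
    by_cases h : n ≤ nΓ
    · exact Finset.le_sup' _ (Finset.mem_Icc.mpr ⟨hn1, h⟩)
    · exact (hmono n (le_of_not_ge h)).trans
        (Finset.le_sup' _ (Finset.mem_Icc.mpr ⟨hnΓ1, le_refl _⟩))
end

section
/- Let m ∈ ℕ and for each i ∈ {1,…,m} let (I_i, 𝓘_i) be a non-empty measurable space with a preorder ≤_i whose triangular set Δ_i = {(t_i,s_i) : s_i ≤_i t_i} belongs to 𝓘_i ⊗ 𝓘_i. Equip I = I_1 × ⋯ × I_m with the product σ-field 𝓘 = 𝓘_1 ⊗ ⋯ ⊗ 𝓘_m and the componentwise preorder (s ≤ t iff s_i ≤_i t_i for all i). Let μ be a σ-finite measure on 𝓘 and k a non-negative kernel on I, and for each i let μ_i be a σ-finite measure on 𝓘_i and k_i a non-negative kernel on I_i, such that μ ≤ μ_1 ⊗ ⋯ ⊗ μ_m and k(t,s) ≤ k_1(t_1,s_1) ⋯ k_m(t_m,s_m) for all s ≤ t. Then for all n ∈ ℕ and s ≤ t in I: R_{k,μ,n}(t,s) ≤ R_{k_1,μ_1,n}(t_1,s_1) ⋯ R_{k_m,μ_m,n}(t_m,s_m).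 Moreover, for p ≥ 1 and every t ∈ I: I_{k,μ,p}(t) ≤ Σ_{n=1}^∞ Π_{i=1}^m (∫_{I_i(t_i)} R_{k_i^p,μ_i,n}(t_i,s_i) μ_i(ds_i))^{1/p} ≤ Π_{i=1}^m I_{k_i,μ_i,p}(t_i). If μ = μ_1 ⊗ ⋯ ⊗ μ_m and k(t,s) = k_1(t_1,s_1) ⋯ k_m(t_m,s_m) for all s ≤ t, then the bound on R_{k,μ,n} and the first inequality for I_{k,μ,p}(t) are equalities. -/
/-!
The box `[s, t]` of the product order is the product of the boxes `[sᵢ, tᵢ]`, so by Tonelli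
`∏ᵢ R_{kᵢ,μᵢ,n+1}(tᵢ,sᵢ)` is the integral over `[s, t]` against `⊗ᵢ μᵢ` of
`∏ᵢ kᵢ(tᵢ,uᵢ) R_{kᵢ,μᵢ,n}(uᵢ,sᵢ)`. Induction on `n`, comparing first the integrands
(`k ≤ ∏ᵢ kᵢ`) and then the measures (`μ ≤ ⊗ᵢ μᵢ`), bounds `R_{k,μ,n}`, with equality when both
comparisons are equalities. Integrating over the box `I(t) = ∏ᵢ Iᵢ(tᵢ)` in the same way bounds
each term of the series for `k^p`, and the last inequality is `∑ₙ ∏ᵢ aₙᵢ ≤ ∏ᵢ ∑ₙ aₙᵢ` for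
non-negative terms.
-/

open MeasureTheory ENNReal Set

theorem ENNReal.tsum_prod_le_prod_tsum {ι β : Type*} {s : Finset ι} (hs : s.Nonempty)
    (a : β → ι → ℝ≥0∞) : ∑' n, ∏ i ∈ s, a n i ≤ ∏ i ∈ s, ∑' n, a n i := by
  induction hs using Finset.Nonempty.cons_induction with
  | singleton j => simp
  | cons j s hj hs ih =>
    simp only [Finset.prod_cons]
    calc ∑' n, a n j * ∏ i ∈ s, a n i
        ≤ ∑' n, (∑' l, a l j) * ∏ i ∈ s, a n i :=
          ENNReal.tsum_le_tsum fun n => mul_le_mul_left (ENNReal.le_tsum n) _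
      _ = (∑' l, a l j) * ∑' n, ∏ i ∈ s, a n i := ENNReal.tsum_mul_left
      _ ≤ (∑' l, a l j) * ∏ i ∈ s, ∑' n, a n i := mul_le_mul_right ih _

namespace MeasureTheory

theorem lintegral_fin_nat_prod_eq_prod {n : ℕ} {E : Fin n → Type*} [∀ i, MeasurableSpace (E i)]
    {μ : ∀ i, Measure (E i)} [∀ i, SigmaFinite (μ i)] {f : ∀ i, E i → ℝ≥0∞}
    (hf : ∀ i, AEMeasurable (f i) (μ i)) :
    ∫⁻ x, ∏ i, f i (x i) ∂Measure.pi μ = ∏ i, ∫⁻ x, f i x ∂μ i := by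
  induction n with
  | zero => simp
  | succ n ih =>
    have htail : AEMeasurable (fun y : ∀ j, E (Fin.succAbove 0 j) => ∏ j, f _ (y j))
        (Measure.pi fun j => μ (Fin.succAbove 0 j)) :=
      Finset.aemeasurable_fun_prod _ fun j _ =>
        (hf _).comp_quasiMeasurePreserving (Measure.quasiMeasurePreserving_eval _ j)
    calc ∫⁻ x, ∏ i, f i (x i) ∂Measure.pi μ
        = ∫⁻ y : E 0 × ∀ j, E (Fin.succAbove 0 j), f 0 y.1 * ∏ j, f _ (y.2 j)
            ∂(μ 0).prod (Measure.pi fun j => μ (Fin.succAbove 0 j)) := by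
          rw [(measurePreserving_piFinSuccAbove μ 0).lintegral_map_equiv]
          exact lintegral_congr fun x => Fin.prod_univ_succAbove _ 0
      _ = ∏ i, ∫⁻ x, f i x ∂μ i := by
          rw [lintegral_prod_mul (hf 0) htail, ih fun j => hf _, Fin.prod_univ_succAbove _ 0]

theorem lintegral_fintype_prod_eq_prod {ι : Type*} [Fintype ι] {E : ι → Type*}
    [∀ i, MeasurableSpace (E i)] {μ : ∀ i, Measure (E i)} [∀ i, SigmaFinite (μ i)]
    {f : ∀ i, E i → ℝ≥0∞} (hf : ∀ i, AEMeasurable (f i) (μ i)) :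
    ∫⁻ x, ∏ i, f i (x i) ∂Measure.pi μ = ∏ i, ∫⁻ x, f i x ∂μ i := by
  let e := (Fintype.equivFin ι).symm
  rw [(measurePreserving_piCongrLeft μ e).lintegral_map_equiv]
  simp_rw [← e.prod_comp, MeasurableEquiv.coe_piCongrLeft, Equiv.piCongrLeft_apply_apply]
  exact lintegral_fin_nat_prod_eq_prod fun i => hf (e i)

theorem setLIntegral_univ_pi_prod_eq_prod {ι : Type*} [Fintype ι] {E : ι → Type*}
    [∀ i, MeasurableSpace (E i)] {μ : ∀ i, Measure (E i)} [∀ i, SigmaFinite (μ i)]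
    {S : ∀ i, Set (E i)} {f : ∀ i, E i → ℝ≥0∞}
    (hf : ∀ i, AEMeasurable (f i) ((μ i).restrict (S i))) :
    ∫⁻ x in univ.pi S, ∏ i, f i (x i) ∂Measure.pi μ = ∏ i, ∫⁻ x in S i, f i x ∂μ i := by
  rw [Measure.restrict_pi_pi]
  exact lintegral_fintype_prod_eq_prod hf

end MeasureTheory

section Triangle

variable {α : Type*} [MeasurableSpace α] [Preorder α]
  (hΔ : MeasurableSet {q : α × α | q.2 ≤ q.1})
include hΔ

theorem measurableSet_Iic_of_measurableSet_triangle (t : α) : MeasurableSet (Iic t) :=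
  hΔ.preimage (measurable_const.prodMk measurable_id)

theorem measurableSet_Icc_of_measurableSet_triangle (s t : α) : MeasurableSet (Icc s t) :=
  (hΔ.preimage (measurable_id.prodMk measurable_const)).inter
    (measurableSet_Iic_of_measurableSet_triangle hΔ t)

end Triangle

theorem measurableSet_pi_triangle {ι : Type*} [Countable ι] {I : ι → Type*}
    [∀ i, MeasurableSpace (I i)] [∀ i, Preorder (I i)]
    (hΔ : ∀ i, MeasurableSet {q : I i × I i | q.2 ≤ q.1}) :
    MeasurableSet {q : (∀ i, I i) × (∀ i, I i) | q.2 ≤ q.1} := by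
  simp only [Pi.le_def, ofPred_forall]
  exact .iInter fun i => (hΔ i).preimage
    ((measurable_pi_apply i).prodMap (measurable_pi_apply i))

section Resolvent

variable {α : Type*} [MeasurableSpace α] [Preorder α] {μ : Measure α} {k : α → α → ℝ≥0∞}

theorem res_succ (n : ℕ) (t s : α) :
    res (· ≤ ·) μ k (n + 1) t s = ∫⁻ u in Icc s t, k t u * res (· ≤ ·) μ k n u s ∂μ :=
  rfl

theorem res_congr {k' : α → α → ℝ≥0∞} (hΔ : MeasurableSet {q : α × α | q.2 ≤ q.1})
    (h : ∀ s t, s ≤ t → k t s = k' t s) (n : ℕ) {s t : α} (hst : s ≤ t) :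
    res (· ≤ ·) μ k n t s = res (· ≤ ·) μ k' n t s := by
  induction n generalizing t with
  | zero => exact h s t hst
  | succ n ih =>
    refine setLIntegral_congr_fun (measurableSet_Icc_of_measurableSet_triangle hΔ s t)
      fun u hu => ?_
    rw [h u t hu.2, ih hu.1]

theorem measurable_res_s14 [SigmaFinite μ] (hΔ : MeasurableSet {q : α × α | q.2 ≤ q.1})
    (hk : Measurable (Function.uncurry k)) (n : ℕ) :
    Measurable (Function.uncurry (res (· ≤ ·) μ k n)) := by
  induction n with
  | zero => exact hk
  | succ n ih =>
    let S : Set ((α × α) × α) := {x | x.1.2 ≤ x.2 ∧ x.2 ≤ x.1.1}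
    have hS : MeasurableSet S :=
      (hΔ.preimage (measurable_snd.prodMk measurable_fst.snd)).inter
        (hΔ.preimage (measurable_fst.fst.prodMk measurable_snd))
    have hintegrand :
        Measurable fun x : (α × α) × α => k x.1.1 x.2 * res (· ≤ ·) μ k n x.2 x.1.2 :=
      (hk.comp (measurable_fst.fst.prodMk measurable_snd)).mul
        (ih.comp (measurable_snd.prodMk measurable_fst.snd))
    have hres : Function.uncurry (res (· ≤ ·) μ k (n + 1)) = fun q =>
        ∫⁻ u, S.indicator (fun x => k x.1.1 x.2 * res (· ≤ ·) μ k n x.2 x.1.2) (q, u) ∂μ := by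
      funext q
      rw [Function.uncurry_apply_pair, res_succ,
        ← lintegral_indicator (measurableSet_Icc_of_measurableSet_triangle hΔ q.2 q.1)]
      rfl
    rw [hres]
    exact (hintegrand.indicator hS).lintegral_prod_right'

/-- Kernels are only measurable on the triangular set; extended by zero they become jointly
measurable without changing their resolvents there (`res_truncKernel`). -/
noncomputable def truncKernel (k : α → α → ℝ≥0∞) (t s : α) : ℝ≥0∞ :=
  open Classical in if s ≤ t then k t s else 0

variable (hΔ : MeasurableSet {q : α × α | q.2 ≤ q.1})
  (hk : Measurable fun q : {q : α × α // q.2 ≤ q.1} => k q.1.1 q.1.2)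
include hΔ

theorem res_truncKernel (n : ℕ) {s t : α} (hst : s ≤ t) :
    res (· ≤ ·) μ (truncKernel k) n t s = res (· ≤ ·) μ k n t s :=
  res_congr hΔ (fun _ _ h => if_pos h) n hst

include hk

theorem measurable_truncKernel : Measurable (Function.uncurry (truncKernel k)) := by
  refine measurable_of_restrict_of_restrict_compl hΔ ?_ ?_
  · change Measurable fun q : {q : α × α // q.2 ≤ q.1} => truncKernel k q.1.1 q.1.2
    convert hk using 2 with q
    exact if_pos q.2
  · change Measurable fun q : {q : α × α // ¬q.2 ≤ q.1} => truncKernel k q.1.1 q.1.2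
    convert measurable_const (a := (0 : ℝ≥0∞)) using 2 with q
    exact if_neg q.2

variable [SigmaFinite μ]

theorem aemeasurable_res_restrict_Iic (n : ℕ) (t : α) (ν : Measure α) :
    AEMeasurable (fun s => res (· ≤ ·) μ k n t s) (ν.restrict (Iic t)) := by
  have hmeas : Measurable fun s => res (· ≤ ·) μ (truncKernel k) n t s :=
    (measurable_res_s14 hΔ (measurable_truncKernel hΔ hk) n).comp
      (measurable_const.prodMk measurable_id)
  refine hmeas.aemeasurable.congr (ae_restrict_of_forall_mem
    (measurableSet_Iic_of_measurableSet_triangle hΔ t) fun s hs => ?_)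
  exact res_truncKernel hΔ n hs

theorem aemeasurable_mul_res_restrict_Icc (n : ℕ) (s t : α) (ν : Measure α) :
    AEMeasurable (fun u => k t u * res (· ≤ ·) μ k n u s) (ν.restrict (Icc s t)) := by
  have hmeas : Measurable fun u => truncKernel k t u * res (· ≤ ·) μ (truncKernel k) n u s :=
    ((measurable_truncKernel hΔ hk).comp (measurable_const.prodMk measurable_id)).mul
      ((measurable_res_s14 hΔ (measurable_truncKernel hΔ hk) n).comp
        (measurable_id.prodMk measurable_const))
  refine hmeas.aemeasurable.congr (ae_restrict_of_forall_mem
    (measurableSet_Icc_of_measurableSet_triangle hΔ s t) fun u hu => ?_)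
  change truncKernel k t u * _ = _
  rw [res_truncKernel hΔ n hu.1, truncKernel, if_pos hu.2]

end Resolvent

section Product

variable {ι : Type*} [Fintype ι] {I : ι → Type*} [∀ i, MeasurableSpace (I i)]
  [∀ i, Preorder (I i)] (μi : ∀ i, Measure (I i)) [∀ i, SigmaFinite (μi i)]
  {ki : ∀ i, I i → I i → ℝ≥0∞} (hΔ : ∀ i, MeasurableSet {q : I i × I i | q.2 ≤ q.1})
  (hki : ∀ i, Measurable fun q : {q : I i × I i // q.2 ≤ q.1} => ki i q.1.1 q.1.2)
include hΔ hki

theorem prod_res_succ (n : ℕ) (s t : ∀ i, I i) :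
    ∏ i, res (· ≤ ·) (μi i) (ki i) (n + 1) (t i) (s i)
      = ∫⁻ u in Icc s t, ∏ i, ki i (t i) (u i) * res (· ≤ ·) (μi i) (ki i) n (u i) (s i)
          ∂Measure.pi μi := by
  rw [← pi_univ_Icc, setLIntegral_univ_pi_prod_eq_prod fun i =>
    aemeasurable_mul_res_restrict_Icc (hΔ i) (hki i) n (s i) (t i) (μi i)]
  rfl

theorem prod_setLIntegral_res (n : ℕ) (t : ∀ i, I i) :
    ∏ i, ∫⁻ si in Iic (t i), res (· ≤ ·) (μi i) (ki i) n (t i) si ∂μi i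
      = ∫⁻ s in Iic t, ∏ i, res (· ≤ ·) (μi i) (ki i) n (t i) (s i) ∂Measure.pi μi := by
  rw [← pi_univ_Iic, setLIntegral_univ_pi_prod_eq_prod fun i =>
    aemeasurable_res_restrict_Iic (hΔ i) (hki i) n (t i) (μi i)]

variable {μ : Measure (∀ i, I i)} {k : (∀ i, I i) → (∀ i, I i) → ℝ≥0∞}

theorem res_le_prod_res (hμ : μ ≤ Measure.pi μi)
    (hkle : ∀ s t : ∀ i, I i, s ≤ t → k t s ≤ ∏ i, ki i (t i) (s i))
    (n : ℕ) {s t : ∀ i, I i} (hst : s ≤ t) :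
    res (· ≤ ·) μ k n t s ≤ ∏ i, res (· ≤ ·) (μi i) (ki i) n (t i) (s i) := by
  induction n generalizing t with
  | zero => exact hkle s t hst
  | succ n ih =>
    rw [res_succ, prod_res_succ μi hΔ hki]
    calc ∫⁻ u in Icc s t, k t u * res (· ≤ ·) μ k n u s ∂μ
        ≤ ∫⁻ u in Icc s t, ∏ i, ki i (t i) (u i) * res (· ≤ ·) (μi i) (ki i) n (u i) (s i) ∂μ :=
          setLIntegral_mono' (measurableSet_Icc_of_measurableSet_triangle
            (measurableSet_pi_triangle hΔ) s t) fun u hu => by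
              rw [Finset.prod_mul_distrib]
              exact mul_le_mul' (hkle u t hu.2) (ih hu.1)
      _ ≤ _ := lintegral_mono' (Measure.restrict_mono subset_rfl hμ) le_rfl

theorem res_eq_prod_res (hkeq : ∀ s t : ∀ i, I i, s ≤ t → k t s = ∏ i, ki i (t i) (s i))
    (n : ℕ) {s t : ∀ i, I i} (hst : s ≤ t) :
    res (· ≤ ·) (Measure.pi μi) k n t s = ∏ i, res (· ≤ ·) (μi i) (ki i) n (t i) (s i) := by
  induction n generalizing t with
  | zero => exact hkeq s t hst
  | succ n ih =>
    rw [res_succ, prod_res_succ μi hΔ hki]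
    refine setLIntegral_congr_fun (measurableSet_Icc_of_measurableSet_triangle
      (measurableSet_pi_triangle hΔ) s t) fun u hu => ?_
    rw [Finset.prod_mul_distrib, hkeq u t hu.2, ih hu.1]

theorem setLIntegral_res_le_prod (hμ : μ ≤ Measure.pi μi)
    (hkle : ∀ s t : ∀ i, I i, s ≤ t → k t s ≤ ∏ i, ki i (t i) (s i)) (n : ℕ) (t : ∀ i, I i) :
    ∫⁻ s in Iic t, res (· ≤ ·) μ k n t s ∂μ
      ≤ ∏ i, ∫⁻ si in Iic (t i), res (· ≤ ·) (μi i) (ki i) n (t i) si ∂μi i := by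
  rw [prod_setLIntegral_res μi hΔ hki]
  calc ∫⁻ s in Iic t, res (· ≤ ·) μ k n t s ∂μ
      ≤ ∫⁻ s in Iic t, ∏ i, res (· ≤ ·) (μi i) (ki i) n (t i) (s i) ∂μ :=
        setLIntegral_mono' (measurableSet_Iic_of_measurableSet_triangle
          (measurableSet_pi_triangle hΔ) t) fun s hs => res_le_prod_res μi hΔ hki hμ hkle n hs
    _ ≤ _ := lintegral_mono' (Measure.restrict_mono subset_rfl hμ) le_rfl

theorem setLIntegral_res_eq_prod
    (hkeq : ∀ s t : ∀ i, I i, s ≤ t → k t s = ∏ i, ki i (t i) (s i)) (n : ℕ) (t : ∀ i, I i) :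
    ∫⁻ s in Iic t, res (· ≤ ·) (Measure.pi μi) k n t s ∂Measure.pi μi
      = ∏ i, ∫⁻ si in Iic (t i), res (· ≤ ·) (μi i) (ki i) n (t i) si ∂μi i := by
  rw [prod_setLIntegral_res μi hΔ hki]
  exact setLIntegral_congr_fun (measurableSet_Iic_of_measurableSet_triangle
    (measurableSet_pi_triangle hΔ) t) fun s hs => res_eq_prod_res μi hΔ hki hkeq n hs

end Product

theorem kernels_on_cartesian_products_general {m : ℕ} (hm : 0 < m)
    {I : Fin m → Type*} [∀ i, MeasurableSpace (I i)] [∀ i, Preorder (I i)]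
    (hΔ : ∀ i, MeasurableSet {q : I i × I i | q.2 ≤ q.1})
    (μ : Measure (∀ i, I i))
    (μi : ∀ i, Measure (I i)) [∀ i, SigmaFinite (μi i)]
    (hμ : μ ≤ Measure.pi μi)
    (k : (∀ i, I i) → (∀ i, I i) → ℝ≥0∞)
    (ki : ∀ i, I i → I i → ℝ≥0∞)
    (hki : ∀ i, Measurable fun q : {q : I i × I i // q.2 ≤ q.1} => ki i q.1.1 q.1.2)
    (hkle : ∀ s t : ∀ i, I i, s ≤ t → k t s ≤ ∏ i, ki i (t i) (s i))
    (p : ℝ) (hp : 1 ≤ p) :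
    (∀ (n : ℕ) (s t : ∀ i, I i), s ≤ t →
      res (· ≤ ·) μ k n t s ≤ ∏ i, res (· ≤ ·) (μi i) (ki i) n (t i) (s i)) ∧
    (∀ t : ∀ i, I i,
      (∑' n : ℕ,
        (∫⁻ s in {s : ∀ i, I i | s ≤ t},
          res (· ≤ ·) μ (fun a b => k a b ^ p) n t s ∂μ) ^ (1 / p))
        ≤ ∑' n : ℕ, ∏ i,
            (∫⁻ si in {si : I i | si ≤ t i},
              res (· ≤ ·) (μi i) (fun a b => ki i a b ^ p) n (t i) si ∂(μi i)) ^ (1 / p) ∧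
      (∑' n : ℕ, ∏ i,
          (∫⁻ si in {si : I i | si ≤ t i},
            res (· ≤ ·) (μi i) (fun a b => ki i a b ^ p) n (t i) si ∂(μi i)) ^ (1 / p))
        ≤ ∏ i, ∑' n : ℕ,
            (∫⁻ si in {si : I i | si ≤ t i},
              res (· ≤ ·) (μi i) (fun a b => ki i a b ^ p) n (t i) si ∂(μi i)) ^ (1 / p)) ∧
    (μ = Measure.pi μi → (∀ s t : ∀ i, I i, s ≤ t → k t s = ∏ i, ki i (t i) (s i)) →
      (∀ (n : ℕ) (s t : ∀ i, I i), s ≤ t →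
        res (· ≤ ·) μ k n t s = ∏ i, res (· ≤ ·) (μi i) (ki i) n (t i) (s i)) ∧
      (∀ t : ∀ i, I i,
        (∑' n : ℕ,
          (∫⁻ s in {s : ∀ i, I i | s ≤ t},
            res (· ≤ ·) μ (fun a b => k a b ^ p) n t s ∂μ) ^ (1 / p))
          = ∑' n : ℕ, ∏ i,
              (∫⁻ si in {si : I i | si ≤ t i},
                res (· ≤ ·) (μi i) (fun a b => ki i a b ^ p) n (t i) si ∂(μi i)) ^ (1 / p))) := by
  have hp0 : 0 ≤ p := zero_le_one.trans hp
  have hkip : ∀ i, Measurable fun q : {q : I i × I i // q.2 ≤ q.1} => ki i q.1.1 q.1.2 ^ p :=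
    fun i => (hki i).pow_const p
  have hkple : ∀ s t : ∀ i, I i, s ≤ t → k t s ^ p ≤ ∏ i, ki i (t i) (s i) ^ p :=
    fun s t hst => (rpow_le_rpow (hkle s t hst) hp0).trans_eq (prod_rpow_of_nonneg hp0).symm
  have : Nonempty (Fin m) := Fin.pos_iff_nonempty.mp hm
  refine ⟨fun n s t hst => res_le_prod_res μi hΔ hki hμ hkle n hst,
    fun t => ⟨ENNReal.tsum_le_tsum fun n => ?_, tsum_prod_le_prod_tsum Finset.univ_nonempty _⟩,
    fun hμeq hkeq => ?_⟩
  · rw [prod_rpow_of_nonneg (by positivity)]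
    exact rpow_le_rpow (setLIntegral_res_le_prod μi hΔ hkip hμ hkple n t) (by positivity)
  · subst hμeq
    have hkpeq : ∀ s t : ∀ i, I i, s ≤ t → k t s ^ p = ∏ i, ki i (t i) (s i) ^ p :=
      fun s t hst => by rw [hkeq s t hst, prod_rpow_of_nonneg hp0]
    refine ⟨fun n s t hst => res_eq_prod_res μi hΔ hki hkeq n hst, fun t => tsum_congr fun n => ?_⟩
    rw [prod_rpow_of_nonneg (by positivity)]
    exact congrArg (· ^ (1 / p)) (setLIntegral_res_eq_prod μi hΔ hkip hkpeq n t)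

/-- **Kernels on Cartesian products** (Proposition 3 of the paper): if
`μ ≤ μ₁ ⊗ ⋯ ⊗ μ_m` and `k(t,s) ≤ k₁(t₁,s₁) ⋯ k_m(t_m,s_m)` on the triangular set,
then `R_{k,μ,n}(t,s) ≤ ∏ᵢ R_{kᵢ,μᵢ,n}(tᵢ,sᵢ)`, and for `p ≥ 1`
`I_{k,μ,p}(t) ≤ ∑_{n=1}^∞ ∏ᵢ (∫_{Iᵢ(tᵢ)} R_{kᵢ^p,μᵢ,n}(tᵢ,sᵢ) μᵢ(dsᵢ))^{1/p}
  ≤ ∏ᵢ I_{kᵢ,μᵢ,p}(tᵢ)`; if both comparisons are equalities, the bound on the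
resolvent sequence and the first series inequality are identities
(indices are shifted by one: `res … n = R_{·,n+1}`). -/
theorem kernels_on_cartesian_products {m : ℕ} (hm : 0 < m)
    {I : Fin m → Type*} [∀ i, MeasurableSpace (I i)] [∀ i, Preorder (I i)]
    [∀ i, Nonempty (I i)]
    (hΔ : ∀ i, MeasurableSet {q : I i × I i | q.2 ≤ q.1})
    (μ : Measure (∀ i, I i)) [SigmaFinite μ]
    (μi : ∀ i, Measure (I i)) [∀ i, SigmaFinite (μi i)]
    (hμ : μ ≤ Measure.pi μi)
    (k : (∀ i, I i) → (∀ i, I i) → ℝ≥0∞)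
    (hk : Measurable fun q : {q : (∀ i, I i) × (∀ i, I i) // q.2 ≤ q.1} => k q.1.1 q.1.2)
    (ki : ∀ i, I i → I i → ℝ≥0∞)
    (hki : ∀ i, Measurable fun q : {q : I i × I i // q.2 ≤ q.1} => ki i q.1.1 q.1.2)
    (hkle : ∀ s t : ∀ i, I i, s ≤ t → k t s ≤ ∏ i, ki i (t i) (s i))
    (p : ℝ) (hp : 1 ≤ p) :
    (∀ (n : ℕ) (s t : ∀ i, I i), s ≤ t →
      res (· ≤ ·) μ k n t s ≤ ∏ i, res (· ≤ ·) (μi i) (ki i) n (t i) (s i)) ∧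
    (∀ t : ∀ i, I i,
      (∑' n : ℕ,
        (∫⁻ s in {s : ∀ i, I i | s ≤ t},
          res (· ≤ ·) μ (fun a b => k a b ^ p) n t s ∂μ) ^ (1 / p))
        ≤ ∑' n : ℕ, ∏ i,
            (∫⁻ si in {si : I i | si ≤ t i},
              res (· ≤ ·) (μi i) (fun a b => ki i a b ^ p) n (t i) si ∂(μi i)) ^ (1 / p) ∧
      (∑' n : ℕ, ∏ i,
          (∫⁻ si in {si : I i | si ≤ t i},
            res (· ≤ ·) (μi i) (fun a b => ki i a b ^ p) n (t i) si ∂(μi i)) ^ (1 / p))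
        ≤ ∏ i, ∑' n : ℕ,
            (∫⁻ si in {si : I i | si ≤ t i},
              res (· ≤ ·) (μi i) (fun a b => ki i a b ^ p) n (t i) si ∂(μi i)) ^ (1 / p)) ∧
    (μ = Measure.pi μi → (∀ s t : ∀ i, I i, s ≤ t → k t s = ∏ i, ki i (t i) (s i)) →
      (∀ (n : ℕ) (s t : ∀ i, I i), s ≤ t →
        res (· ≤ ·) μ k n t s = ∏ i, res (· ≤ ·) (μi i) (ki i) n (t i) (s i)) ∧
      (∀ t : ∀ i, I i,
        (∑' n : ℕ,
          (∫⁻ s in {s : ∀ i, I i | s ≤ t},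
            res (· ≤ ·) μ (fun a b => k a b ^ p) n t s ∂μ) ^ (1 / p))
          = ∑' n : ℕ, ∏ i,
              (∫⁻ si in {si : I i | si ≤ t i},
                res (· ≤ ·) (μi i) (fun a b => ki i a b ^ p) n (t i) si ∂(μi i)) ^ (1 / p))) :=
  kernels_on_cartesian_products_general hm hΔ μ μi hμ k ki hki hkle p hp
end

section
/- Assume conditions (C.1) and (C.2) hold, (d_t)_{t∈I} is complete, Ψ is sequentially continuous, and x_0 ∈ X satisfies Σ_{n=1}^∞ (∫_{I(t)} R_{λ^p,μ,n}(t,s) Λ(s,x_0,Ψ(x_0))^p μ(ds))^{1/p} < ∞ for all t ∈ I. Then the Picard sequence (x_n)_{n∈ℕ} defined recursively by x_n := Ψ(x_{n−1}) converges to a fixed point x̂ of Ψ (that is, Ψ(x̂) = x̂ and lim_{n→∞} d_t(x_n,x̂) = 0 for all t ∈ I), and d_t(x_n,x̂) ≤ Σ_{i=n}^∞ (∫_{I(t)} R_{λ^p,μ,i}(t,s) Λ(s,x_0,Ψ(x_0))^p μ(ds))^{1/p} for all n ∈ ℕ and t ∈ I. Moreover, if lim_{n→∞} ∫_{I(t)}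 R_{λ^p,μ,n}(t,s) Λ(s,x,x̃)^p μ(ds) = 0 for all t ∈ I and x, x̃ ∈ Ψ(X), then x̂ is the unique fixed point of Ψ. -/
open MeasureTheory ENNReal Filter

/-!
Iterating (C.1) and feeding `Λ ≤ d` back into it gives, by Tonelli,
`d_t(Ψ^{n+1} x, Ψ^{n+1} x̃)^p ≤ ∫_{I(t)} R_{n+1}(t,s) Λ(s,x,x̃)^p μ(ds)`.
With `x = x₀`, `x̃ = Ψ x₀` this bounds the distance between consecutive Picard iterates by the
terms of the convergent series, so the Picard sequence is Cauchy and converges by completeness;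
sequential continuity makes the limit a fixed point, and the same estimate for two fixed points
gives uniqueness. To apply Tonelli, the kernel is extended by zero off the triangle: the plain
iterates of the extended kernel on `I × I` are jointly measurable and agree with the resolvent.
-/

section PicardSequence

variable {X : Type*} {d : X → X → ℝ≥0∞}

theorem dist_le_sum_of_le_succ (hrefl : ∀ x, d x x = 0)
    (htri : ∀ x y z, d x z ≤ d x y + d y z) {x : ℕ → X} {a : ℕ → ℝ≥0∞}
    (hstep : ∀ n, d (x n) (x (n + 1)) ≤ a n) (n k : ℕ) :
    d (x n) (x (n + k)) ≤ ∑ i ∈ Finset.range k, a (n + i) := by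
  induction k with
  | zero => simp [hrefl]
  | succ k ih =>
    calc d (x n) (x (n + (k + 1)))
        ≤ d (x n) (x (n + k)) + d (x (n + k)) (x (n + k + 1)) := htri _ _ _
      _ ≤ ∑ i ∈ Finset.range k, a (n + i) + a (n + k) := add_le_add ih (hstep _)
      _ = ∑ i ∈ Finset.range (k + 1), a (n + i) := (Finset.sum_range_succ _ k).symm

theorem dist_le_tsum_of_le_succ (hrefl : ∀ x, d x x = 0)
    (htri : ∀ x y z, d x z ≤ d x y + d y z) {x : ℕ → X} {a : ℕ → ℝ≥0∞}
    (hstep : ∀ n, d (x n) (x (n + 1)) ≤ a n) {n m : ℕ} (hnm : n ≤ m) :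
    d (x n) (x m) ≤ ∑' i, a (n + i) := by
  obtain ⟨k, rfl⟩ := Nat.exists_eq_add_of_le hnm
  exact (dist_le_sum_of_le_succ hrefl htri hstep n k).trans (ENNReal.sum_le_tsum _)

theorem tendsto_iSup_dist_of_le_succ (hrefl : ∀ x, d x x = 0)
    (htri : ∀ x y z, d x z ≤ d x y + d y z) {x : ℕ → X} {a : ℕ → ℝ≥0∞}
    (hstep : ∀ n, d (x n) (x (n + 1)) ≤ a n) (ha : ∑' n, a n ≠ ∞) :
    Tendsto (fun n => ⨆ m ∈ Set.Ici n, d (x n) (x m)) atTop (nhds 0) := by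
  refine tendsto_of_tendsto_of_tendsto_of_le_of_le tendsto_const_nhds
    (ENNReal.tendsto_sum_nat_add a ha) (fun _ => zero_le) fun n => iSup₂_le fun m hm => ?_
  simpa only [add_comm n] using dist_le_tsum_of_le_succ hrefl htri hstep hm

theorem dist_le_tsum_of_tendsto (hrefl : ∀ x, d x x = 0)
    (htri : ∀ x y z, d x z ≤ d x y + d y z) {x : ℕ → X} {a : ℕ → ℝ≥0∞}
    (hstep : ∀ n, d (x n) (x (n + 1)) ≤ a n) {y : X}
    (hy : Tendsto (fun m => d (x m) y) atTop (nhds 0)) (n : ℕ) :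
    d (x n) y ≤ ∑' i, a (n + i) := by
  have hlim : Tendsto (fun m => ∑' i, a (n + i) + d (x m) y) atTop (nhds (∑' i, a (n + i))) := by
    simpa using tendsto_const_nhds.add hy
  refine ge_of_tendsto hlim ?_
  filter_upwards [eventually_ge_atTop n] with m hm
  exact (htri _ (x m) _).trans (add_le_add (dist_le_tsum_of_le_succ hrefl htri hstep hm) le_rfl)

theorem eq_zero_of_tendsto_of_tendsto (hsymm : ∀ x y, d x y = d y x)
    (htri : ∀ x y z, d x z ≤ d x y + d y z) {x : ℕ → X} {y z : X}
    (hy : Tendsto (fun n => d (x n) y) atTop (nhds 0))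
    (hz : Tendsto (fun n => d (x n) z) atTop (nhds 0)) :
    d y z = 0 := by
  have hsum : Tendsto (fun n => d (x n) y + d (x n) z) atTop (nhds 0) := by
    simpa using hy.add hz
  refine nonpos_iff_eq_zero.mp (ge_of_tendsto' hsum fun n => ?_)
  exact hsymm (x n) y ▸ htri y (x n) z

end PicardSequence

section IteratedKernel

variable {I : Type*} [MeasurableSpace I]

noncomputable def iteratedKernel (μ : Measure I) (K : I → I → ℝ≥0∞) : ℕ → I → I → ℝ≥0∞
  | 0 => K
  | n + 1 => fun t s => ∫⁻ u, K t u * iteratedKernel μ K n u s ∂μ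

theorem measurable_iteratedKernel (μ : Measure I) [SFinite μ] {K : I → I → ℝ≥0∞}
    (hK : Measurable (Function.uncurry K)) :
    ∀ n, Measurable (Function.uncurry (iteratedKernel μ K n))
  | 0 => hK
  | n + 1 =>
    ((hK.comp (measurable_fst.fst.prodMk measurable_snd)).mul
      ((measurable_iteratedKernel μ hK n).comp
        (measurable_snd.prodMk measurable_fst.snd))).lintegral_prod_right'

theorem lintegral_iteratedKernel_succ_mul (μ : Measure I) [SFinite μ] {K : I → I → ℝ≥0∞}
    (hK : Measurable (Function.uncurry K)) {f : I → ℝ≥0∞} (hf : Measurable f) (n : ℕ) (t : I) :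
    ∫⁻ u, iteratedKernel μ K (n + 1) t u * f u ∂μ
      = ∫⁻ s, K t s * ∫⁻ u, iteratedKernel μ K n s u * f u ∂μ ∂μ := by
  have hR := measurable_iteratedKernel μ hK n
  have hKt : Measurable (K t) := hK.comp measurable_prodMk_left
  calc ∫⁻ u, iteratedKernel μ K (n + 1) t u * f u ∂μ
      = ∫⁻ u, ∫⁻ s, K t s * (iteratedKernel μ K n s u * f u) ∂μ ∂μ := by
        refine lintegral_congr fun u => ?_
        have hm : Measurable fun s => K t s * iteratedKernel μ K n s u :=
          hKt.mul (hR.comp measurable_prodMk_right)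
        simp only [iteratedKernel, ← lintegral_mul_const _ hm, mul_assoc]
    _ = ∫⁻ s, ∫⁻ u, K t s * (iteratedKernel μ K n s u * f u) ∂μ ∂μ :=
        lintegral_lintegral_swap ((hKt.comp measurable_snd).mul
          ((hR.comp measurable_swap).mul (hf.comp measurable_fst))).aemeasurable
    _ = ∫⁻ s, K t s * ∫⁻ u, iteratedKernel μ K n s u * f u ∂μ ∂μ :=
        lintegral_congr fun s =>
          lintegral_const_mul _ ((hR.comp measurable_prodMk_left).mul hf)

theorem iterate_le_lintegral_iteratedKernel (μ : Measure I) [SFinite μ] {K : I → I → ℝ≥0∞}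
    (hK : Measurable (Function.uncurry K)) {X : Type*} {d Λ : I → X → X → ℝ≥0∞}
    (hΛ : ∀ x y, Measurable fun t => Λ t x y) {Ψ : X → X} {p : ℝ} (hp : 0 < p)
    (hΨ : ∀ t x y, d t (Ψ x) (Ψ y) ≤ (∫⁻ s, K t s * Λ s x y ^ p ∂μ) ^ (1 / p))
    (hΛd : ∀ t x y, Λ t x y ≤ d t x y) (n : ℕ) (t : I) (x y : X) :
    d t (Ψ^[n + 1] x) (Ψ^[n + 1] y)
      ≤ (∫⁻ s, iteratedKernel μ K n t s * Λ s x y ^ p ∂μ) ^ (1 / p) := by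
  induction n generalizing t with
  | zero => exact hΨ t x y
  | succ n ih =>
    have hΛp : ∀ s, Λ s (Ψ^[n + 1] x) (Ψ^[n + 1] y) ^ p
        ≤ ∫⁻ u, iteratedKernel μ K n s u * Λ u x y ^ p ∂μ := fun s => by
      rw [← ENNReal.le_rpow_inv_iff hp, ← one_div]
      exact (hΛd s _ _).trans (ih s)
    rw [Function.iterate_succ_apply' Ψ _ x, Function.iterate_succ_apply' Ψ _ y,
      lintegral_iteratedKernel_succ_mul μ hK ((hΛ x y).pow_const p)]
    exact (hΨ t _ _).trans (ENNReal.rpow_le_rpow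
      (lintegral_mono fun s => by gcongr; exact hΛp s) (by positivity))

end IteratedKernel

section LowerKernel

variable {I : Type*} [Preorder I]

open Classical in
noncomputable def lowerKernel (k : I → I → ℝ≥0∞) (t s : I) : ℝ≥0∞ :=
  if s ≤ t then k t s else 0

open Classical in
theorem measurable_lowerKernel [MeasurableSpace I] (hΔ : MeasurableSet {q : I × I | q.2 ≤ q.1})
    {k : I → I → ℝ≥0∞} (hk : Measurable fun q : {q : I × I // q.2 ≤ q.1} => k q.1.1 q.1.2) :
    Measurable (Function.uncurry (lowerKernel k)) :=
  Measurable.dite (f := fun q : {q : I × I // q.2 ≤ q.1} => k q.1.1 q.1.2) (g := fun _ => 0)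
    hk measurable_const hΔ

theorem lowerKernel_mul_eq_indicator (k : I → I → ℝ≥0∞) (f : I → ℝ≥0∞) (t : I) :
    (fun s => lowerKernel k t s * f s) = (Set.Iic t).indicator fun s => k t s * f s := by
  ext s
  by_cases hs : s ≤ t <;> simp [lowerKernel, hs]

theorem lintegral_lowerKernel_mul [MeasurableSpace I] (hΔ : MeasurableSet {q : I × I | q.2 ≤ q.1})
    (μ : Measure I) (k : I → I → ℝ≥0∞) (f : I → ℝ≥0∞) (t : I) :
    ∫⁻ s, lowerKernel k t s * f s ∂μ = ∫⁻ s in {s | s ≤ t}, k t s * f s ∂μ := by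
  have hIic : MeasurableSet (Set.Iic t) := measurable_prodMk_left hΔ
  rw [lowerKernel_mul_eq_indicator, lintegral_indicator hIic]
  rfl

theorem iteratedKernel_lowerKernel [MeasurableSpace I] (hΔ : MeasurableSet {q : I × I | q.2 ≤ q.1})
    (μ : Measure I) (k : I → I → ℝ≥0∞) :
    ∀ n, iteratedKernel μ (lowerKernel k) n = lowerKernel (res (· ≤ ·) μ k n)
  | 0 => rfl
  | n + 1 => by
    ext t s
    have hIcc : MeasurableSet (Set.Icc s t) :=
      (measurable_prodMk_right hΔ).inter (measurable_prodMk_left hΔ)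
    have hind : (fun u => lowerKernel k t u * lowerKernel (res (· ≤ ·) μ k n) u s)
        = (Set.Icc s t).indicator fun u => k t u * res (· ≤ ·) μ k n u s := by
      ext u
      by_cases hut : u ≤ t <;> by_cases hsu : s ≤ u <;> simp [lowerKernel, hut, hsu]
    simp only [iteratedKernel, iteratedKernel_lowerKernel hΔ μ k n, hind,
      lintegral_indicator hIcc]
    by_cases hst : s ≤ t
    · simp only [lowerKernel, hst, if_true]
      rfl
    · simp [lowerKernel, hst]

theorem iterate_le_lintegral_res [MeasurableSpace I] (hΔ : MeasurableSet {q : I × I | q.2 ≤ q.1})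
    (μ : Measure I) [SFinite μ] {k : I → I → ℝ≥0∞}
    (hk : Measurable fun q : {q : I × I // q.2 ≤ q.1} => k q.1.1 q.1.2)
    {X : Type*} {d Λ : I → X → X → ℝ≥0∞} (hΛ : ∀ x y, Measurable fun t => Λ t x y)
    {Ψ : X → X} {p : ℝ} (hp : 0 < p)
    (hΨ : ∀ t x y, d t (Ψ x) (Ψ y) ≤ (∫⁻ s in {s | s ≤ t}, k t s * Λ s x y ^ p ∂μ) ^ (1 / p))
    (hΛd : ∀ t x y, Λ t x y ≤ d t x y) (n : ℕ) (t : I) (x y : X) :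
    d t (Ψ^[n + 1] x) (Ψ^[n + 1] y)
      ≤ (∫⁻ s in {s | s ≤ t}, res (· ≤ ·) μ k n t s * Λ s x y ^ p ∂μ) ^ (1 / p) := by
  rw [← lintegral_lowerKernel_mul hΔ, ← iteratedKernel_lowerKernel hΔ]
  refine iterate_le_lintegral_iteratedKernel μ (measurable_lowerKernel hΔ hk) hΛ hp
    (fun t' x' y' => ?_) hΛd n t x y
  rw [lintegral_lowerKernel_mul hΔ]
  exact hΨ t' x' y'

end LowerKernel

theorem fixed_point_theorem_general {I X : Type*} [MeasurableSpace I] [Preorder I]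
    (hΔ : MeasurableSet {q : I × I | q.2 ≤ q.1})
    (d : I → X → X → ℝ≥0∞)
    (hd0 : ∀ x y : X, x = y ↔ ∀ t : I, d t x y = 0)
    (Ψ : X → X)
    (Λ : I → X → X → ℝ≥0∞) (hΛmeas : ∀ x y : X, Measurable fun t : I => Λ t x y)
    (μ : Measure I) [SigmaFinite μ]
    (p : ℝ) (hp : 1 ≤ p)
    (lam : I → I → ℝ≥0∞)
    (hlam : Measurable fun q : {q : I × I // q.2 ≤ q.1} => lam q.1.1 q.1.2)
    (hC1a : ∀ (t : I) (x y : X),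
      d t (Ψ x) (Ψ y) ≤ (∫⁻ s in {s : I | s ≤ t}, lam t s ^ p * Λ s x y ^ p ∂μ) ^ (1 / p))
    (hC1b : ∀ (t : I) (x y : X), Λ t x y ≤ d t x y)
    (hC2refl : ∀ (t : I) (x : X), d t x x = 0)
    (hC2symm : ∀ (t : I) (x y : X), d t x y = d t y x)
    (hC2triangle : ∀ (t : I) (x y z : X), d t x z ≤ d t x y + d t y z)
    (hcomplete : ∀ x : ℕ → X,
      (∀ t : I, Tendsto (fun n : ℕ => ⨆ m ∈ Set.Ici n, d t (x n) (x m)) atTop (nhds 0)) →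
      ∃ y : X, ∀ t : I, Tendsto (fun n : ℕ => d t (x n) y) atTop (nhds 0))
    (hseqcont : ∀ (x : ℕ → X) (y : X),
      (∀ t : I, Tendsto (fun n : ℕ => d t (x n) y) atTop (nhds 0)) →
      ∀ t : I, Tendsto (fun n : ℕ => d t (Ψ (x n)) (Ψ y)) atTop (nhds 0))
    (x₀ : X)
    (hx₀ : ∀ t : I,
      (∑' n : ℕ,
        (∫⁻ s in {s : I | s ≤ t},
          res (· ≤ ·) μ (fun a b => lam a b ^ p) n t s * Λ s x₀ (Ψ x₀) ^ p ∂μ) ^ (1 / p)) < ∞) :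
    ∃ xhat : X, Ψ xhat = xhat ∧
      (∀ t : I, Tendsto (fun n : ℕ => d t (Ψ^[n] x₀) xhat) atTop (nhds 0)) ∧
      (∀ (n : ℕ) (t : I),
        d t (Ψ^[n + 1] x₀) xhat
          ≤ ∑' i : ℕ,
              (∫⁻ s in {s : I | s ≤ t},
                res (· ≤ ·) μ (fun a b => lam a b ^ p) (n + i) t s
                  * Λ s x₀ (Ψ x₀) ^ p ∂μ) ^ (1 / p)) ∧
      ((∀ (t : I) (x y : X),
          Tendsto (fun n : ℕ =>
              ∫⁻ s in {s : I | s ≤ t},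
                res (· ≤ ·) μ (fun a b => lam a b ^ p) n t s * Λ s (Ψ x) (Ψ y) ^ p ∂μ)
            atTop (nhds 0)) →
        ∀ y : X, Ψ y = y → y = xhat) := by
  have hp0 : 0 < p := zero_lt_one.trans_le hp
  have hiter := iterate_le_lintegral_res hΔ μ (hlam.pow_const p) hΛmeas hp0 hC1a hC1b
  have hstep : ∀ t n, d t (Ψ^[n + 1] x₀) (Ψ^[n + 1 + 1] x₀) ≤ _ := fun t n => hiter n t x₀ (Ψ x₀)
  obtain ⟨xhat, hlim⟩ := hcomplete (fun n => Ψ^[n + 1] x₀) fun t =>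
    tendsto_iSup_dist_of_le_succ (hC2refl t) (hC2triangle t) (hstep t) (hx₀ t).ne
  have hfix : Ψ xhat = xhat := by
    refine (hd0 _ _).mpr fun t => eq_zero_of_tendsto_of_tendsto (hC2symm t) (hC2triangle t)
      (x := fun n => Ψ^[n + 1 + 1] x₀) ?_ ((hlim t).comp (tendsto_add_atTop_nat 1))
    simpa only [Function.iterate_succ_apply'] using hseqcont _ xhat hlim t
  refine ⟨xhat, hfix, fun t => ?_, fun n t => ?_, fun hR y hy => ?_⟩
  · exact (tendsto_add_atTop_iff_nat (f := fun n => d t (Ψ^[n] x₀) xhat) 1).mp (hlim t)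
  · exact dist_le_tsum_of_tendsto (hC2refl t) (hC2triangle t) (hstep t) (hlim t) n
  · refine (hd0 y xhat).mpr fun t => nonpos_iff_eq_zero.mp ?_
    have hlim0 := (hR t y xhat).ennrpow_const (1 / p)
    rw [hy, hfix, ENNReal.zero_rpow_of_pos (by positivity)] at hlim0
    refine ge_of_tendsto' hlim0 fun n => ?_
    simpa only [Function.iterate_fixed hy, Function.iterate_fixed hfix] using hiter n t y xhat

/-- **Fixed point theorem for evolution operators** (Theorem 1 of the paper): under
(C.1) and (C.2), if the family `(d_t)` is complete, `Ψ` is sequentially continuous and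
`x₀` satisfies `∑_{n=1}^∞ (∫_{I(t)} R_{λ^p,μ,n}(t,s) Λ(s,x₀,Ψ(x₀))^p μ(ds))^{1/p} < ∞`
for all `t`, then the Picard sequence `x_n = Ψ^[n] x₀` converges to a fixed point `x̂`
of `Ψ` with the error estimate
`d_t(x_n,x̂) ≤ ∑_{i=n}^∞ (∫_{I(t)} R_{λ^p,μ,i}(t,s) Λ(s,x₀,Ψ(x₀))^p μ(ds))^{1/p}`
for `n ≥ 1`; moreover, if `∫_{I(t)} R_{λ^p,μ,n}(t,s) Λ(s,x,x̃)^p μ(ds) → 0` for all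
`t ∈ I` and `x, x̃ ∈ Ψ(X)`, then `x̂` is the unique fixed point
(resolvent indices are shifted by one: `res … n = R_{·,n+1}`). -/
theorem fixed_point_theorem {I X : Type*} [MeasurableSpace I] [Preorder I]
    [Nonempty X]
    (hΔ : MeasurableSet {q : I × I | q.2 ≤ q.1})
    (d : I → X → X → ℝ≥0∞)
    (hd0 : ∀ x y : X, x = y ↔ ∀ t : I, d t x y = 0)
    (hdmeas : ∀ x y : X, Measurable fun t : I => d t x y)
    (Ψ : X → X)
    (Λ : I → X → X → ℝ≥0∞) (hΛmeas : ∀ x y : X, Measurable fun t : I => Λ t x y)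
    (μ : Measure I) [SigmaFinite μ]
    (p : ℝ) (hp : 1 ≤ p)
    (lam : I → I → ℝ≥0∞)
    (hlam : Measurable fun q : {q : I × I // q.2 ≤ q.1} => lam q.1.1 q.1.2)
    (hC1a : ∀ (t : I) (x y : X),
      d t (Ψ x) (Ψ y) ≤ (∫⁻ s in {s : I | s ≤ t}, lam t s ^ p * Λ s x y ^ p ∂μ) ^ (1 / p))
    (hC1b : ∀ (t : I) (x y : X), Λ t x y ≤ d t x y)
    (hC2refl : ∀ (t : I) (x : X), d t x x = 0)
    (hC2symm : ∀ (t : I) (x y : X), d t x y = d t y x)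
    (hC2triangle : ∀ (t : I) (x y z : X), d t x z ≤ d t x y + d t y z)
    (hcomplete : ∀ x : ℕ → X,
      (∀ t : I, Tendsto (fun n : ℕ => ⨆ m ∈ Set.Ici n, d t (x n) (x m)) atTop (nhds 0)) →
      ∃ y : X, ∀ t : I, Tendsto (fun n : ℕ => d t (x n) y) atTop (nhds 0))
    (hseqcont : ∀ (x : ℕ → X) (y : X),
      (∀ t : I, Tendsto (fun n : ℕ => d t (x n) y) atTop (nhds 0)) →
      ∀ t : I, Tendsto (fun n : ℕ => d t (Ψ (x n)) (Ψ y)) atTop (nhds 0))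
    (x₀ : X)
    (hx₀ : ∀ t : I,
      (∑' n : ℕ,
        (∫⁻ s in {s : I | s ≤ t},
          res (· ≤ ·) μ (fun a b => lam a b ^ p) n t s * Λ s x₀ (Ψ x₀) ^ p ∂μ) ^ (1 / p)) < ∞) :
    ∃ xhat : X, Ψ xhat = xhat ∧
      (∀ t : I, Tendsto (fun n : ℕ => d t (Ψ^[n] x₀) xhat) atTop (nhds 0)) ∧
      (∀ (n : ℕ) (t : I),
        d t (Ψ^[n + 1] x₀) xhat
          ≤ ∑' i : ℕ,
              (∫⁻ s in {s : I | s ≤ t},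
                res (· ≤ ·) μ (fun a b => lam a b ^ p) (n + i) t s
                  * Λ s x₀ (Ψ x₀) ^ p ∂μ) ^ (1 / p)) ∧
      ((∀ (t : I) (x y : X),
          Tendsto (fun n : ℕ =>
              ∫⁻ s in {s : I | s ≤ t},
                res (· ≤ ·) μ (fun a b => lam a b ^ p) n t s * Λ s (Ψ x) (Ψ y) ^ p ∂μ)
            atTop (nhds 0)) →
        ∀ y : X, Ψ y = y → y = xhat) :=
  fixed_point_theorem_general hΔ d hd0 Ψ Λ hΛmeas μ p hp lam hlam hC1a hC1b hC2refl hC2symm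
    hC2triangle hcomplete hseqcont x₀ hx₀
end

section
/- Assume conditions (C.1) and (C.2) hold. If the family (d_t)_{t∈I} is increasing (i.e. d_s(x,x̃) ≤ d_t(x,x̃) for all s ≤ t and x, x̃ ∈ X) and ∫_{I(t)} λ(t,s)^p μ(ds) < ∞ for all t ∈ I, then Ψ is sequentially continuous: whenever a sequence (x_n) in X satisfies lim_{n→∞} d_t(x_n,x) = 0 for all t ∈ I and some x ∈ X, then lim_{n→∞} d_t(Ψ(x_n),Ψ(x)) = 0 for all t ∈ I. -/
open MeasureTheory ENNReal Filter

/-! Fix `t`. Since `Λ ≤ d` and `d` is increasing, `Λ s x y ≤ d t x y` on `I(t)`, so (C.1) gives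
`d_t(Ψ x, Ψ y) ≤ d_t(x, y) · (∫_{I(t)} λ(t,s)^p μ(ds))^{1/p}` whenever `d_t(x, y) < ∞`; the constant
is finite, so `d_t(x_n, x) → 0` forces `d_t(Ψ x_n, Ψ x) → 0`. -/

lemma rpow_setLIntegral_mul_rpow_le {α : Type*} [MeasurableSpace α] {μ : Measure α} {S : Set α}
    (hS : MeasurableSet S) {p : ℝ} (hp : 0 < p) {f g : α → ℝ≥0∞} {c : ℝ≥0∞} (hc : c ≠ ∞)
    (hg : ∀ s ∈ S, g s ≤ c) :
    (∫⁻ s in S, f s ^ p * g s ^ p ∂μ) ^ (1 / p) ≤ c * (∫⁻ s in S, f s ^ p ∂μ) ^ (1 / p) := by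
  have hp' : 0 ≤ 1 / p := by positivity
  calc (∫⁻ s in S, f s ^ p * g s ^ p ∂μ) ^ (1 / p)
      ≤ (∫⁻ s in S, c ^ p * f s ^ p ∂μ) ^ (1 / p) := by
        refine rpow_le_rpow (lintegral_mono_ae ((ae_restrict_iff' hS).2 (.of_forall ?_))) hp'
        intro s hs
        rw [mul_comm]
        gcongr
        exact hg s hs
      _ = c * (∫⁻ s in S, f s ^ p ∂μ) ^ (1 / p) := by
        rw [lintegral_const_mul' _ _ (rpow_ne_top_of_nonneg hp.le hc), mul_rpow_of_nonneg _ _ hp',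
          ← rpow_mul, mul_one_div_cancel hp.ne', rpow_one]

lemma tendsto_zero_of_le_mul_of_tendsto_zero {ι : Type*} {l : Filter ι} {a b : ι → ℝ≥0∞}
    {C : ℝ≥0∞} (ha : Tendsto a l (nhds 0)) (hC : C ≠ ∞) (hb : ∀ i, a i ≠ ∞ → b i ≤ a i * C) :
    Tendsto b l (nhds 0) := by
  have haC : Tendsto (fun i => a i * C) l (nhds 0) := by
    simpa using ENNReal.Tendsto.mul_const ha (Or.inr hC)
  have ha_fin : ∀ᶠ i in l, a i ≠ ∞ :=
    (ha.eventually (gt_mem_nhds one_pos)).mono fun i hi => (hi.trans one_lt_top).ne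
  exact tendsto_of_tendsto_of_tendsto_of_le_of_le' tendsto_const_nhds haC
    (.of_forall fun _ => zero_le) (ha_fin.mono hb)

theorem sequential_continuity_general {I X : Type*} [MeasurableSpace I] [Preorder I]
    (hΔ : MeasurableSet {q : I × I | q.2 ≤ q.1})
    (d : I → X → X → ℝ≥0∞)
    (Ψ : X → X)
    (Λ : I → X → X → ℝ≥0∞)
    (μ : Measure I)
    (p : ℝ) (hp : 1 ≤ p)
    (lam : I → I → ℝ≥0∞)
    (hC1a : ∀ (t : I) (x y : X),
      d t (Ψ x) (Ψ y) ≤ (∫⁻ s in {s : I | s ≤ t}, lam t s ^ p * Λ s x y ^ p ∂μ) ^ (1 / p))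
    (hC1b : ∀ (t : I) (x y : X), Λ t x y ≤ d t x y)
    (hincr : ∀ s t : I, s ≤ t → ∀ x y : X, d s x y ≤ d t x y)
    (hint : ∀ t : I, (∫⁻ s in {s : I | s ≤ t}, lam t s ^ p ∂μ) < ∞) :
    ∀ (x : ℕ → X) (y : X),
      (∀ t : I, Tendsto (fun n : ℕ => d t (x n) y) atTop (nhds 0)) →
      ∀ t : I, Tendsto (fun n : ℕ => d t (Ψ (x n)) (Ψ y)) atTop (nhds 0) := by
  intro x y hx t
  have hp0 : 0 < p := zero_lt_one.trans_le hp
  have hC : (∫⁻ s in {s : I | s ≤ t}, lam t s ^ p ∂μ) ^ (1 / p) ≠ ∞ :=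
    (rpow_lt_top_of_nonneg (by positivity) (hint t).ne).ne
  refine tendsto_zero_of_le_mul_of_tendsto_zero (hx t) hC fun n hn => ?_
  calc d t (Ψ (x n)) (Ψ y)
      ≤ (∫⁻ s in {s : I | s ≤ t}, lam t s ^ p * Λ s (x n) y ^ p ∂μ) ^ (1 / p) := hC1a t (x n) y
    _ ≤ d t (x n) y * (∫⁻ s in {s : I | s ≤ t}, lam t s ^ p ∂μ) ^ (1 / p) :=
        rpow_setLIntegral_mul_rpow_le (measurable_prodMk_left hΔ) hp0 hn
          fun s hs => (hC1b s (x n) y).trans (hincr s t hs (x n) y)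

/-- **Sequential continuity of the evolution operator** (Lemma 7 of the paper, the
implication (i) ⇒ (iii)): under (C.1) and (C.2), if the family `(d_t)_{t ∈ I}` is
increasing and `∫_{I(t)} λ(t,s)^p μ(ds) < ∞` for all `t ∈ I`, then `Ψ` is sequentially
continuous: whenever `d_t(x_n, x) → 0` for all `t`, also `d_t(Ψ(x_n), Ψ(x)) → 0`
for all `t`. -/
theorem sequential_continuity {I X : Type*} [MeasurableSpace I] [Preorder I]
    [Nonempty X]
    (hΔ : MeasurableSet {q : I × I | q.2 ≤ q.1})
    (d : I → X → X → ℝ≥0∞)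
    (hd0 : ∀ x y : X, x = y ↔ ∀ t : I, d t x y = 0)
    (hdmeas : ∀ x y : X, Measurable fun t : I => d t x y)
    (Ψ : X → X)
    (Λ : I → X → X → ℝ≥0∞) (hΛmeas : ∀ x y : X, Measurable fun t : I => Λ t x y)
    (μ : Measure I) [SigmaFinite μ]
    (p : ℝ) (hp : 1 ≤ p)
    (lam : I → I → ℝ≥0∞)
    (hlam : Measurable fun q : {q : I × I // q.2 ≤ q.1} => lam q.1.1 q.1.2)
    (hC1a : ∀ (t : I) (x y : X),
      d t (Ψ x) (Ψ y) ≤ (∫⁻ s in {s : I | s ≤ t}, lam t s ^ p * Λ s x y ^ p ∂μ) ^ (1 / p))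
    (hC1b : ∀ (t : I) (x y : X), Λ t x y ≤ d t x y)
    (hC2refl : ∀ (t : I) (x : X), d t x x = 0)
    (hC2symm : ∀ (t : I) (x y : X), d t x y = d t y x)
    (hC2triangle : ∀ (t : I) (x y z : X), d t x z ≤ d t x y + d t y z)
    (hincr : ∀ s t : I, s ≤ t → ∀ x y : X, d s x y ≤ d t x y)
    (hint : ∀ t : I, (∫⁻ s in {s : I | s ≤ t}, lam t s ^ p ∂μ) < ∞) :
    ∀ (x : ℕ → X) (y : X),
      (∀ t : I, Tendsto (fun n : ℕ => d t (x n) y) atTop (nhds 0)) →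
      ∀ t : I, Tendsto (fun n : ℕ => d t (Ψ (x n)) (Ψ y)) atTop (nhds 0) :=
  sequential_continuity_general hΔ d Ψ Λ μ p hp lam hC1a hC1b hincr hint
end
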